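/- arXiv:1612.05528 — 10 statements merged into one kernel-verified Lean document; each statement's English description precedes it below -/
import Mathlib

section
/- Let U ⊆ ℂ be open, λ : U → ℂ differentiable (holomorphic), and let x : ℕ × U → ℂ be such that for each ω ∈ U the sequence x(·,ω) solves the Jacobi difference equation with coefficients (𝔞, 𝔟) and spectral parameter λ(ω), and for each k the map ω ↦ x(k,ω) is differentiable at a point ω₀ ∈ U. Write ẋ(k) for the ω-derivative of x(k,·) at ω₀ and λ̇ for the derivative of λ at ω₀. Then for every N ≥ 1, 𝔟(N)·{ẋ, x̄(·,ω₀)}(N) − 𝔟(0)·{ẋ, x̄(·,ω₀)}(0) = λ̇·∑_{k=1}^{N} |x(k,ω₀)|² + (λ(ω₀) − λ(ω₀)^̄)·∑_{k=1}^{N} ẋ(k)·x̄(k,ω₀), where {x,y}(k) = x(k)y(k+1) − x(k+1)y(k). -/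
open Complex

/-- The Jacobi difference equation: for all `k ≥ 1`,
`-𝔟(k-1)·x(k-1) + 𝔞(k)·x(k) - 𝔟(k)·x(k+1) = λ·x(k)` (here written with `k+1` in place of `k`). -/
def IsJacobiSolution (𝔞 𝔟 : ℕ → ℝ) (lam : ℂ) (x : ℕ → ℂ) : Prop :=
  ∀ k : ℕ, -(𝔟 k : ℂ) * x k + (𝔞 (k + 1) : ℂ) * x (k + 1) - (𝔟 (k + 1) : ℂ) * x (k + 2)
    = lam * x (k + 1)

/-- Discrete Wronskian `{x,y}(k) = x(k)y(k+1) − x(k+1)y(k)`. -/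
def discrWronskian (x y : ℕ → ℂ) (k : ℕ) : ℂ := x k * y (k + 1) - x (k + 1) * y k

/-!
Differentiating the Jacobi equation `J x = λ x` in `ω` gives `J ẋ = λ̇ x + λ ẋ`, while `x̄` solves
`J x̄ = λ̄ x̄` because the coefficients are real. Green's formula for the formally symmetric
operator `J` turns `∑ (J ẋ · x̄ - ẋ · J x̄)` into the difference of the weighted Wronskians at the
ends, and the summand is `λ̇ |x|² + (λ - λ̄) ẋ x̄`.
-/

open ComplexConjugate

/-- The left-hand side of the Jacobi equation at `k + 1`, so that `IsJacobiSolution 𝔞 𝔟 λ x`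
says `jacobiOp 𝔞 𝔟 x k = λ * x (k + 1)` for all `k`. -/
def jacobiOp (𝔞 𝔟 : ℕ → ℝ) (x : ℕ → ℂ) (k : ℕ) : ℂ :=
  -(𝔟 k : ℂ) * x k + (𝔞 (k + 1) : ℂ) * x (k + 1) - (𝔟 (k + 1) : ℂ) * x (k + 2)

section Jacobi

variable {𝔞 𝔟 : ℕ → ℝ}

theorem isJacobiSolution_iff {lam : ℂ} {x : ℕ → ℂ} :
    IsJacobiSolution 𝔞 𝔟 lam x ↔ ∀ k, jacobiOp 𝔞 𝔟 x k = lam * x (k + 1) :=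
  Iff.rfl

theorem jacobiOp_conj (x : ℕ → ℂ) (k : ℕ) :
    jacobiOp 𝔞 𝔟 (fun j => conj (x j)) k = conj (jacobiOp 𝔞 𝔟 x k) := by
  simp [jacobiOp]

theorem IsJacobiSolution.conj {lam : ℂ} {x : ℕ → ℂ} (hx : IsJacobiSolution 𝔞 𝔟 lam x) :
    IsJacobiSolution 𝔞 𝔟 (conj lam) (fun j => conj (x j)) :=
  isJacobiSolution_iff.2 fun k => by rw [jacobiOp_conj, isJacobiSolution_iff.1 hx k, map_mul]

theorem hasDerivAt_jacobiOp {x : ℕ → ℂ → ℂ} {x' : ℕ → ℂ} {ω₀ : ℂ}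
    (hx' : ∀ k, HasDerivAt (x k) (x' k) ω₀) (k : ℕ) :
    HasDerivAt (fun ω => jacobiOp 𝔞 𝔟 (fun j => x j ω) k) (jacobiOp 𝔞 𝔟 x' k) ω₀ :=
  (((hx' k).const_mul _).add ((hx' (k + 1)).const_mul _)).sub ((hx' (k + 2)).const_mul _)

theorem jacobiOp_eq_of_hasDerivAt {lam : ℂ → ℂ} {lam' ω₀ : ℂ} {x : ℕ → ℂ → ℂ} {x' : ℕ → ℂ}
    (hx : ∀ᶠ ω in nhds ω₀, IsJacobiSolution 𝔞 𝔟 (lam ω) (fun k => x k ω))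
    (hlam : HasDerivAt lam lam' ω₀) (hx' : ∀ k, HasDerivAt (x k) (x' k) ω₀) (k : ℕ) :
    jacobiOp 𝔞 𝔟 x' k = lam' * x (k + 1) ω₀ + lam ω₀ * x' (k + 1) := by
  have hprod : HasDerivAt (fun ω => lam ω * x (k + 1) ω)
      (lam' * x (k + 1) ω₀ + lam ω₀ * x' (k + 1)) ω₀ :=
    hlam.mul (hx' (k + 1))
  refine (hasDerivAt_jacobiOp hx' k).unique (hprod.congr_of_eventuallyEq ?_)
  filter_upwards [hx] with ω hω using hω k

/-- Lagrange's identity for the Jacobi operator. -/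
theorem mul_discrWronskian_succ_sub (u v : ℕ → ℂ) (k : ℕ) :
    (𝔟 (k + 1) : ℂ) * discrWronskian u v (k + 1) - 𝔟 k * discrWronskian u v k
      = jacobiOp 𝔞 𝔟 u k * v (k + 1) - u (k + 1) * jacobiOp 𝔞 𝔟 v k := by
  simp only [discrWronskian, jacobiOp]
  ring

/-- Green's formula: the summation index `k` stands for the site `k + 1 ∈ {1, …, N}`. -/
theorem mul_discrWronskian_sub_mul_discrWronskian_zero (u v : ℕ → ℂ) (N : ℕ) :
    (𝔟 N : ℂ) * discrWronskian u v N - 𝔟 0 * discrWronskian u v 0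
      = ∑ k ∈ Finset.range N, (jacobiOp 𝔞 𝔟 u k * v (k + 1) - u (k + 1) * jacobiOp 𝔞 𝔟 v k) := by
  rw [← Finset.sum_range_sub (fun k => (𝔟 k : ℂ) * discrWronskian u v k) N]
  exact Finset.sum_congr rfl fun k _ => mul_discrWronskian_succ_sub u v k

end Jacobi

theorem sum_Icc_one_eq_sum_range {M : Type*} [AddCommMonoid M] (f : ℕ → M) (N : ℕ) :
    ∑ k ∈ Finset.Icc 1 N, f k = ∑ k ∈ Finset.range N, f (k + 1) := by
  rw [Finset.range_eq_Ico, Finset.sum_Ico_add' f 0 N 1]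
  rfl

theorem wronskian_deriv_general (𝔞 𝔟 : ℕ → ℝ)
    (U : Set ℂ) (hU : IsOpen U) (ω₀ : ℂ) (hω₀ : ω₀ ∈ U)
    (lam : ℂ → ℂ) (lam' : ℂ)
    (hlam' : HasDerivAt lam lam' ω₀)
    (x : ℕ → ℂ → ℂ) (hx : ∀ ω ∈ U, IsJacobiSolution 𝔞 𝔟 (lam ω) (fun k => x k ω))
    (x' : ℕ → ℂ) (hx' : ∀ k, HasDerivAt (x k) (x' k) ω₀) :
    ∀ N : ℕ, 1 ≤ N →
      (𝔟 N : ℂ) * discrWronskian x' (fun k => (starRingEnd ℂ) (x k ω₀)) N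
        - (𝔟 0 : ℂ) * discrWronskian x' (fun k => (starRingEnd ℂ) (x k ω₀)) 0
      = lam' * ∑ k ∈ Finset.Icc 1 N, ((‖x k ω₀‖ : ℝ) : ℂ) ^ 2
        + (lam ω₀ - (starRingEnd ℂ) (lam ω₀))
          * ∑ k ∈ Finset.Icc 1 N, x' k * (starRingEnd ℂ) (x k ω₀) := by
  intro N _
  have hderiv := jacobiOp_eq_of_hasDerivAt (eventually_nhds_iff.2 ⟨U, hx, hU, hω₀⟩) hlam' hx'
  have hconj := isJacobiSolution_iff.1 (hx ω₀ hω₀).conj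
  rw [mul_discrWronskian_sub_mul_discrWronskian_zero, sum_Icc_one_eq_sum_range,
    sum_Icc_one_eq_sum_range, Finset.mul_sum, Finset.mul_sum, ← Finset.sum_add_distrib]
  refine Finset.sum_congr rfl fun k _ => ?_
  rw [hderiv k, hconj k, ← Complex.ofReal_pow, Complex.sq_norm, ← Complex.mul_conj]
  ring

theorem wronskian_deriv (𝔞 𝔟 : ℕ → ℝ) (h𝔟 : ∀ k, 0 < 𝔟 k)
    (U : Set ℂ) (hU : IsOpen U) (ω₀ : ℂ) (hω₀ : ω₀ ∈ U)
    (lam : ℂ → ℂ) (lam' : ℂ) (hlam : ∀ ω ∈ U, DifferentiableAt ℂ lam ω)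
    (hlam' : HasDerivAt lam lam' ω₀)
    (x : ℕ → ℂ → ℂ) (hx : ∀ ω ∈ U, IsJacobiSolution 𝔞 𝔟 (lam ω) (fun k => x k ω))
    (x' : ℕ → ℂ) (hx' : ∀ k, HasDerivAt (x k) (x' k) ω₀) :
    ∀ N : ℕ, 1 ≤ N →
      (𝔟 N : ℂ) * discrWronskian x' (fun k => (starRingEnd ℂ) (x k ω₀)) N
        - (𝔟 0 : ℂ) * discrWronskian x' (fun k => (starRingEnd ℂ) (x k ω₀)) 0
      = lam' * ∑ k ∈ Finset.Icc 1 N, ((‖x k ω₀‖ : ℝ) : ℂ) ^ 2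
        + (lam ω₀ - (starRingEnd ℂ) (lam ω₀))
          * ∑ k ∈ Finset.Icc 1 N, x' k * (starRingEnd ℂ) (x k ω₀) :=
  wronskian_deriv_general 𝔞 𝔟 U hU ω₀ hω₀ lam lam' hlam' x hx x' hx'
end

section
/- Let a, b ∈ ℝ with b > 0, let θ ∈ ℂ with |θ| = 1, set λ = a − b(θ + θ⁻¹), and suppose 𝔟(k) → b as k → ∞. Let x : ℕ → ℂ be a solution of the Jacobi difference equation with coefficients (𝔞, 𝔟) and spectral parameter λ such that x(k)·θ^{−k} → 1 as k → ∞. Then 𝔟(0)·{x, x̄}(0) = b·(θ̄ − θ), where {x,y}(k) = x(k)y(k+1) − x(k+1)y(k) and x̄ is the complex conjugate sequence. -/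
open Complex Filter

/-!
Since the coefficients are real, `x̄` solves the same equation with parameter `λ̄ = λ`
(as `θ⁻¹ = θ̄`), so `𝔟(k)·{x, x̄}(k)` does not depend on `k`. Writing `x(k) = u(k) θ^k` with
`u → 1`, the Wronskian `{x, x̄}(k) = u(k) ū(k+1) θ̄ − u(k+1) ū(k) θ` tends to `θ̄ − θ`, while
`𝔟(k) → b`.
-/

open ComplexConjugate

namespace IsJacobiSolution

variable {𝔞 𝔟 : ℕ → ℝ} {lam : ℂ} {x y : ℕ → ℂ}

theorem map_conj (hx : IsJacobiSolution 𝔞 𝔟 lam x) :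
    IsJacobiSolution 𝔞 𝔟 (conj lam) (fun k => conj (x k)) := fun k => by
  simpa using congrArg conj (hx k)

theorem mul_discrWronskian_succ (hx : IsJacobiSolution 𝔞 𝔟 lam x)
    (hy : IsJacobiSolution 𝔞 𝔟 lam y) (k : ℕ) :
    (𝔟 (k + 1) : ℂ) * discrWronskian x y (k + 1) = 𝔟 k * discrWronskian x y k := by
  unfold discrWronskian
  linear_combination y (k + 1) * hx k - x (k + 1) * hy k

theorem mul_discrWronskian_eq (hx : IsJacobiSolution 𝔞 𝔟 lam x)
    (hy : IsJacobiSolution 𝔞 𝔟 lam y) (k : ℕ) :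
    (𝔟 k : ℂ) * discrWronskian x y k = 𝔟 0 * discrWronskian x y 0 := by
  induction k with
  | zero => rfl
  | succ k ih => rw [hx.mul_discrWronskian_succ hy, ih]

end IsJacobiSolution

theorem conj_add_inv_of_norm_eq_one {θ : ℂ} (hθ : ‖θ‖ = 1) : conj (θ + θ⁻¹) = θ + θ⁻¹ := by
  rw [map_add, map_inv₀, ← inv_eq_conj hθ, inv_inv, add_comm]

theorem discrWronskian_eq_of_mul_eq_one {θ φ : ℂ} (hθφ : θ * φ = 1) (x y : ℕ → ℂ) (k : ℕ) :
    discrWronskian x y k = x k * φ ^ k * (y (k + 1) * θ ^ (k + 1)) * φ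
      - x (k + 1) * φ ^ (k + 1) * (y k * θ ^ k) * θ := by
  have hpow : θ ^ k * φ ^ k = 1 := by rw [← mul_pow, hθφ, one_pow]
  unfold discrWronskian
  linear_combination (x (k + 1) * y k - x k * y (k + 1)) * (θ ^ k * φ ^ k * hθφ + hpow)

theorem tendsto_discrWronskian_of_jost {θ φ : ℂ} (hθφ : θ * φ = 1) {x y : ℕ → ℂ}
    (hx : Tendsto (fun k => x k * θ⁻¹ ^ k) atTop (nhds 1))
    (hy : Tendsto (fun k => y k * φ⁻¹ ^ k) atTop (nhds 1)) :
    Tendsto (discrWronskian x y) atTop (nhds (φ - θ)) := by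
  rw [inv_eq_of_mul_eq_one_right hθφ] at hx
  rw [inv_eq_of_mul_eq_one_left hθφ] at hy
  have hx' := hx.comp (tendsto_add_atTop_nat 1)
  have hy' := hy.comp (tendsto_add_atTop_nat 1)
  have hlim := ((hx.mul hy').mul_const φ).sub ((hx'.mul hy).mul_const θ)
  simp only [one_mul] at hlim
  exact hlim.congr fun k => (discrWronskian_eq_of_mul_eq_one hθφ x y k).symm

theorem jost_wronskian_boundary_general (a b : ℝ) (θ : ℂ) (hθ : ‖θ‖ = 1)
    (𝔞 𝔟 : ℕ → ℝ)
    (h𝔟lim : Tendsto 𝔟 atTop (nhds b))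
    (x : ℕ → ℂ) (hx : IsJacobiSolution 𝔞 𝔟 (a - b * (θ + θ⁻¹)) x)
    (hjost : Tendsto (fun k : ℕ => x k * θ⁻¹ ^ k) atTop (nhds 1)) :
    (𝔟 0 : ℂ) * discrWronskian x (fun k => (starRingEnd ℂ) (x k)) 0
      = (b : ℂ) * ((starRingEnd ℂ) θ - θ) := by
  have hxbar : IsJacobiSolution 𝔞 𝔟 (a - b * (θ + θ⁻¹)) (fun k => conj (x k)) := by
    simpa [conj_add_inv_of_norm_eq_one hθ] using hx.map_conj
  have hjost_bar : Tendsto (fun k => conj (x k) * (conj θ)⁻¹ ^ k) atTop (nhds 1) := by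
    simpa [Function.comp_def] using (continuous_conj.tendsto 1).comp hjost
  have hθθbar : θ * conj θ = 1 := by simp [mul_conj', hθ]
  have hlim := ((continuous_ofReal.tendsto b).comp h𝔟lim).mul
    (tendsto_discrWronskian_of_jost hθθbar hjost hjost_bar)
  refine tendsto_nhds_unique ?_ hlim
  simp only [Function.comp_def, hx.mul_discrWronskian_eq hxbar]
  exact tendsto_const_nhds

theorem jost_wronskian_boundary (a b : ℝ) (hb : 0 < b) (θ : ℂ) (hθ : ‖θ‖ = 1)
    (𝔞 𝔟 : ℕ → ℝ) (h𝔟 : ∀ k, 0 < 𝔟 k)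
    (h𝔟lim : Tendsto 𝔟 atTop (nhds b))
    (x : ℕ → ℂ) (hx : IsJacobiSolution 𝔞 𝔟 (a - b * (θ + θ⁻¹)) x)
    (hjost : Tendsto (fun k : ℕ => x k * θ⁻¹ ^ k) atTop (nhds 1)) :
    (𝔟 0 : ℂ) * discrWronskian x (fun k => (starRingEnd ℂ) (x k)) 0
      = (b : ℂ) * ((starRingEnd ℂ) θ - θ) :=
  jost_wronskian_boundary_general a b θ hθ 𝔞 𝔟 h𝔟lim x hx hjost
end

section
/- Let U ⊆ ℂ be open, ω₀ ∈ U, λ : U → ℂ differentiable at ω₀ with λ(ω₀) ∈ ℝ, and let x : ℕ × U → ℂ be such that for each ω ∈ U the sequence x(·,ω) solves the Jacobi difference equation with coefficients (𝔞, 𝔟) and spectral parameter λ(ω), each x(k,·) is differentiable at ω₀, and x(k,ω₀) ∈ ℝ for all k. Assume moreover that ∑_{k=1}^{∞} x(k,ω₀)² converges and that 𝔟(N)·{ẋ, x(·,ω₀)}(N) → 0 as N → ∞, where ẋ(k) is the ω-derivative of x(k,·) at ω₀. Then −𝔟(0)·{ẋ, x(·,ω₀)}(0) = λ̇(ω₀)·∑_{k=1}^{∞}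 x(k,ω₀)², where {x,y}(k) = x(k)y(k+1) − x(k+1)y(k). -/
open Complex Filter

theorem wronskian_deriv_real_solution (𝔞 𝔟 : ℕ → ℝ) (h𝔟 : ∀ k, 0 < 𝔟 k)
    (U : Set ℂ) (hU : IsOpen U) (ω₀ : ℂ) (hω₀ : ω₀ ∈ U)
    (lam : ℂ → ℂ) (lam' : ℂ) (hlam' : HasDerivAt lam lam' ω₀)
    (hlamreal : (lam ω₀).im = 0)
    (x : ℕ → ℂ → ℂ) (hx : ∀ ω ∈ U, IsJacobiSolution 𝔞 𝔟 (lam ω) (fun k => x k ω))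
    (x' : ℕ → ℂ) (hx' : ∀ k, HasDerivAt (x k) (x' k) ω₀)
    (hxreal : ∀ k, (x k ω₀).im = 0)
    (hsum : Summable (fun k : ℕ => (x (k + 1) ω₀) ^ 2))
    (hbdry : Tendsto
      (fun N : ℕ => (𝔟 N : ℂ) * discrWronskian x' (fun k => x k ω₀) N) atTop (nhds 0)) :
    -((𝔟 0 : ℂ) * discrWronskian x' (fun k => x k ω₀) 0)
      = lam' * ∑' k : ℕ, (x (k + 1) ω₀) ^ 2 := by
  set W : ℕ → ℂ := fun N => (𝔟 N : ℂ) * discrWronskian x' (fun k => x k ω₀) N with hW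
  -- the differentiated Jacobi equation at ω₀
  have hderiv : ∀ k : ℕ,
      -(𝔟 k : ℂ) * x' k + (𝔞 (k + 1) : ℂ) * x' (k + 1) - (𝔟 (k + 1) : ℂ) * x' (k + 2)
        = lam' * x (k + 1) ω₀ + lam ω₀ * x' (k + 1) := by
    intro k
    set F : ℂ → ℂ := fun ω =>
      -(𝔟 k : ℂ) * x k ω + (𝔞 (k + 1) : ℂ) * x (k + 1) ω - (𝔟 (k + 1) : ℂ) * x (k + 2) ω
        - lam ω * x (k + 1) ω with hF
    have hFderiv : HasDerivAt F
        (-(𝔟 k : ℂ) * x' k + (𝔞 (k + 1) : ℂ) * x' (k + 1) - (𝔟 (k + 1) : ℂ) * x' (k + 2)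
          - (lam' * x (k + 1) ω₀ + lam ω₀ * x' (k + 1))) ω₀ :=
      ((((hx' k).const_mul (-(𝔟 k : ℂ))).add ((hx' (k + 1)).const_mul (𝔞 (k + 1) : ℂ))).sub
        ((hx' (k + 2)).const_mul (𝔟 (k + 1) : ℂ))).sub (hlam'.mul (hx' (k + 1)))
    have hFzero : F =ᶠ[nhds ω₀] fun _ => (0 : ℂ) := by
      filter_upwards [hU.mem_nhds hω₀] with ω hω
      have h := hx ω hω k
      simp only [hF]
      rw [sub_eq_zero]
      exact h
    have h0 : HasDerivAt F 0 ω₀ := (hasDerivAt_const ω₀ (0 : ℂ)).congr_of_eventuallyEq hFzero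
    have := hFderiv.unique h0
    linear_combination this
  -- Green-type identity: the telescoping step
  have hstep : ∀ k : ℕ, W (k + 1) - W k = lam' * (x (k + 1) ω₀) ^ 2 := by
    intro k
    have h1 := hderiv k
    have h2 := hx ω₀ hω₀ k
    simp only [hW, discrWronskian]
    push_cast
    linear_combination (x (k + 1) ω₀) * h1 - (x' (k + 1)) * h2
  have hsumN : ∀ N : ℕ, W N - W 0 = lam' * ∑ k ∈ Finset.range N, (x (k + 1) ω₀) ^ 2 := by
    intro N
    rw [Finset.mul_sum, ← Finset.sum_range_sub W N]
    exact Finset.sum_congr rfl fun k _ => hstep k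
  -- take limits
  have h1 : Tendsto (fun N => W N - W 0) atTop (nhds (0 - W 0)) := hbdry.sub_const (W 0)
  have h2 : Tendsto (fun N => lam' * ∑ k ∈ Finset.range N, (x (k + 1) ω₀) ^ 2) atTop
      (nhds (lam' * ∑' k : ℕ, (x (k + 1) ω₀) ^ 2)) :=
    hsum.hasSum.tendsto_sum_nat.const_mul lam'
  have := tendsto_nhds_unique ((funext hsumN : (fun N => W N - W 0) = _) ▸ h1) h2
  rw [zero_sub] at this
  simpa [hW] using this
end

section
/- In the web model, let λ ∈ ℂ and let ξ, η : 𝒜 → ℂ both satisfy the eigenvalue equation Lξ = λξ and Lη = λη. Then ∑_{σ ∈ 𝒞} 𝔟_σ(0)·{ξ,η}_σ(0) = 0, where {ξ,η}_σ(0) = ξ(σ(0))η(σ(1)) − ξ(σ(1))η(σ(0)). -/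
open Complex

/-- Points of the web: the central part `A1` plus, for each channel `σ ∈ C`, the chain
`σ(1), σ(2), …` (encoded as `Sum.inr (σ, k)` for `σ(k+1)`). -/
abbrev WebPoint (C A1 : Type*) := A1 ⊕ C × ℕ

/-- `webPt γ σ k` is the particle `σ(k)`; `σ(0)` is the attachment point `γ σ ∈ A1`. -/
def webPt {C A1 : Type*} (γ : C → A1) (σ : C) : ℕ → WebPoint C A1
  | 0 => Sum.inl (γ σ)
  | k + 1 => Sum.inr (σ, k)

/-- `ξ` satisfies the eigenvalue equation `Lξ = λξ` (rows of `L` have finite support,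
so the `finsum` is a genuine finite sum). -/
def IsWebEigen {C A1 : Type*} (L : WebPoint C A1 → WebPoint C A1 → ℝ) (lam : ℂ)
    (ξ : WebPoint C A1 → ℂ) : Prop :=
  ∀ α, ∑ᶠ β, (L α β : ℂ) * ξ β = lam * ξ α

theorem web_wronskian_sum_eq_zero
    {C A1 : Type*} [Fintype C] [Nonempty C] [Fintype A1]
    (γ : C → A1) (hγ : Function.Injective γ)
    (𝔞 𝔟 : C → ℕ → ℝ) (h𝔟 : ∀ σ k, 0 < 𝔟 σ k)
    (L : WebPoint C A1 → WebPoint C A1 → ℝ)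
    (hsym : ∀ α β, L α β = L β α)
    (hdiag : ∀ σ k, L (webPt γ σ (k + 1)) (webPt γ σ (k + 1)) = 𝔞 σ (k + 1))
    (hoff : ∀ σ k, L (webPt γ σ k) (webPt γ σ (k + 1)) = -(𝔟 σ k))
    (hzero : ∀ σ (k : ℕ) (β : WebPoint C A1), β ≠ webPt γ σ k → β ≠ webPt γ σ (k + 1) →
      β ≠ webPt γ σ (k + 2) → L (webPt γ σ (k + 1)) β = 0)
    (lam : ℂ) (ξ η : WebPoint C A1 → ℂ)
    (hξ : IsWebEigen L lam ξ) (hη : IsWebEigen L lam η) :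
    ∑ σ : C, (𝔟 σ 0 : ℂ) *
      (ξ (webPt γ σ 0) * η (webPt γ σ 1) - ξ (webPt γ σ 1) * η (webPt γ σ 0)) = 0 := by
  classical
  set ι : C → WebPoint C A1 := fun σ => Sum.inr (σ, 0) with hι
  set T : Finset (WebPoint C A1) :=
    Finset.univ.image Sum.inl ∪ Finset.univ.image ι with hT
  -- rows at central points vanish outside T
  have hrow : ∀ (a : A1) (β : WebPoint C A1), β ∉ T → L (Sum.inl a) β = 0 := by
    intro a β hβ
    match β with
    | Sum.inl b => exact absurd (by simp [hT]) hβ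
    | Sum.inr (σ, 0) => exact absurd (by simp [hT, hι]) hβ
    | Sum.inr (σ, k+1) =>
      rw [hsym]
      have e : (Sum.inr (σ, k+1) : WebPoint C A1) = webPt γ σ (k+2) := rfl
      rw [e]
      exact hzero σ (k+1) _ (by cases k <;> simp [webPt]) (by simp [webPt]) (by simp [webPt])
  have hfin : ∀ (a : A1) (f : WebPoint C A1 → ℂ),
      ∑ᶠ β, (L (Sum.inl a) β : ℂ) * f β = ∑ β ∈ T, (L (Sum.inl a) β : ℂ) * f β := by
    intro a f
    apply finsum_eq_finset_sum_of_support_subset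
    intro β hβ
    by_contra h
    apply hβ
    simp [hrow a β h]
  have key : ∀ a : A1,
      ∑ β ∈ T, (L (Sum.inl a) β : ℂ) * (ξ β * η (Sum.inl a) - ξ (Sum.inl a) * η β) = 0 := by
    intro a
    have h1 := hξ (Sum.inl a); have h2 := hη (Sum.inl a)
    rw [hfin] at h1 h2
    have hpt : ∀ β, (L (Sum.inl a) β : ℂ) * (ξ β * η (Sum.inl a) - ξ (Sum.inl a) * η β)
        = ((L (Sum.inl a) β : ℂ) * ξ β) * η (Sum.inl a)
          - ξ (Sum.inl a) * ((L (Sum.inl a) β : ℂ) * η β) := fun β => by ring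
    simp_rw [hpt]
    rw [Finset.sum_sub_distrib, ← Finset.sum_mul, ← Finset.mul_sum, h1, h2]
    ring
  have hdisj : Disjoint (Finset.univ.image (Sum.inl : A1 → WebPoint C A1))
      (Finset.univ.image ι) := by
    simp only [Finset.disjoint_left, Finset.mem_image]
    rintro x ⟨b, -, rfl⟩ ⟨σ, -, h⟩
    exact Sum.inl_ne_inr h.symm
  have hsplit : ∀ f : WebPoint C A1 → ℂ,
      ∑ β ∈ T, f β = (∑ b : A1, f (Sum.inl b)) + ∑ σ : C, f (ι σ) := by
    intro f
    rw [hT, Finset.sum_union hdisj,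
      Finset.sum_image (fun _ _ _ _ h => Sum.inl_injective h),
      Finset.sum_image (fun σ₁ _ σ₂ _ h => by
        have : (σ₁, (0:ℕ)) = (σ₂, 0) := Sum.inr_injective h
        exact (Prod.mk.injEq ..).mp this |>.1)]
  -- total sum is zero
  have htot : ∑ a : A1, ∑ β ∈ T, (L (Sum.inl a) β : ℂ) *
      (ξ β * η (Sum.inl a) - ξ (Sum.inl a) * η β) = 0 := by
    simp [key]
  simp_rw [hsplit, Finset.sum_add_distrib] at htot
  -- the inl-inl part vanishes by antisymmetry
  set S := ∑ a : A1, ∑ b : A1, (L (Sum.inl a) (Sum.inl b) : ℂ) *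
      (ξ (Sum.inl b) * η (Sum.inl a) - ξ (Sum.inl a) * η (Sum.inl b)) with hS
  have hSneg : S = -S := by
    conv_lhs => rw [hS, Finset.sum_comm]
    rw [hS, ← Finset.sum_neg_distrib]
    refine Finset.sum_congr rfl fun a _ => ?_
    rw [← Finset.sum_neg_distrib]
    refine Finset.sum_congr rfl fun b _ => ?_
    rw [hsym (Sum.inl b) (Sum.inl a)]
    ring
  have hS0 : S = 0 := by linear_combination hSneg / 2
  rw [hS0, zero_add] at htot
  -- the inl-inr part
  have hred : ∑ a : A1, ∑ σ : C, (L (Sum.inl a) (ι σ) : ℂ) *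
      (ξ (ι σ) * η (Sum.inl a) - ξ (Sum.inl a) * η (ι σ))
      = ∑ σ : C, (-(𝔟 σ 0 : ℂ)) *
        (ξ (webPt γ σ 1) * η (webPt γ σ 0) - ξ (webPt γ σ 0) * η (webPt γ σ 1)) := by
    rw [Finset.sum_comm]
    refine Finset.sum_congr rfl fun σ _ => ?_
    rw [Finset.sum_eq_single (γ σ)]
    · have e1 : ι σ = webPt γ σ 1 := rfl
      have e0 : (Sum.inl (γ σ) : WebPoint C A1) = webPt γ σ 0 := rfl
      rw [e1, e0, hoff σ 0]
      push_cast
      ring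
    · intro a _ ha
      have hz : L (Sum.inl a) (ι σ) = 0 := by
        rw [hsym]
        have e1 : ι σ = webPt γ σ 1 := rfl
        rw [e1]
        refine hzero σ 0 _ ?_ (by simp [webPt]) (by simp [webPt])
        simp only [webPt, ne_eq, Sum.inl.injEq]
        exact ha
      rw [hz]
      simp
    · simp
  rw [hred] at htot
  calc ∑ σ : C, (𝔟 σ 0 : ℂ) *
      (ξ (webPt γ σ 0) * η (webPt γ σ 1) - ξ (webPt γ σ 1) * η (webPt γ σ 0))
      = ∑ σ : C, (-(𝔟 σ 0 : ℂ)) *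
        (ξ (webPt γ σ 1) * η (webPt γ σ 0) - ξ (webPt γ σ 0) * η (webPt γ σ 1)) := by
        refine Finset.sum_congr rfl fun σ _ => by ring
    _ = 0 := htot
end

section
/- In the web model, let U ⊆ ℂ be open, ω̂ ∈ U, λ : U → ℂ differentiable at ω̂ with λ(ω̂) ∈ ℝ, and let ξ : 𝒜 × U → ℂ be such that for each ω ∈ U the function ξ(·,ω) satisfies Lξ(·,ω) = λ(ω)·ξ(·,ω), and each ξ(α,·) is differentiable at ω̂. Let η : 𝒜 → ℂ satisfy Lη = λ(ω̂)·η. Then λ̇(ω̂)·∑_{α ∈ 𝒜₁} ξ(α,ω̂)·η̄(α) = ∑_{σ ∈ 𝒞} 𝔟_σ(0)·{ξ̇(·,ω̂), η̄}_σ(0), where ξ̇(α,ω̂) denotes the ω-derivative of ξ(α,·) at ω̂, η̄ is the complex conjugate of η, and {ξ,η}_σ(0) = ξ(σ(0))η(σ(1)) − ξ(σ(1))η(σ(0)). In particular, taking η = ξ(·,ω̂), one has λ̇(ω̂)·∑_{α ∈ 𝒜₁} |ξ(α,ω̂)|² = ∑_{σ ∈ 𝒞} 𝔟_σ(0)·{ξ̇(·,ω̂),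 ξ̄(·,ω̂)}_σ(0). -/
open Complex

/-!
Differentiating `L ξ(ω) = λ(ω) ξ(ω)` at `ω̂` gives `L ξ̇ = λ̇ ξ + λ ξ̇` on the central part. Pairing
this with `η̄` and subtracting `ξ̇ · conj (L η) = λ ξ̇ η̄` (here `λ(ω̂)` is real) leaves
`λ̇ ∑ ξ η̄`. On the other hand this difference is Green's identity for the real symmetric `L`
restricted to the central rows: the central block cancels, and only the couplings `-𝔟_σ(0)`
across the attachment edges survive, producing the channel Wronskians.
-/

open Finset Function Filter Topology ComplexConjugate

theorem finsum_eq_sum_inl_add_sum_inr_zero {A B M : Type*} [Fintype A] [Fintype B]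
    [AddCommMonoid M] (g : A ⊕ B × ℕ → M) (hg : ∀ b k, g (.inr (b, k + 1)) = 0) :
    ∑ᶠ x, g x = ∑ a, g (.inl a) + ∑ b, g (.inr (b, 0)) := by
  let e : A ⊕ B ↪ A ⊕ B × ℕ :=
    ⟨Sum.map id (·, 0), Sum.map_injective.2 ⟨injective_id, fun _ _ h => (Prod.mk.inj h).1⟩⟩
  rw [finsum_eq_sum_of_support_subset g (s := univ.map e), sum_map, Fintype.sum_sum_type]
  · rfl
  rintro (a | ⟨b, _ | k⟩) hx
  · exact mem_map_of_mem e (mem_univ (.inl a))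
  · exact mem_map_of_mem e (mem_univ (.inr b))
  · exact absurd (hg b k) hx

theorem sum_mul_conj_eq_sum_mul_conj_of_symm {ι : Type*} [Fintype ι] {M : ι → ι → ℝ}
    (hM : ∀ i j, M i j = M j i) (u v : ι → ℂ) :
    ∑ i, (∑ j, (M i j : ℂ) * u j) * conj (v i) = ∑ i, u i * conj (∑ j, (M i j : ℂ) * v j) := by
  simp only [sum_mul, mul_sum, map_sum, map_mul, conj_ofReal]
  rw [sum_comm]
  refine sum_congr rfl fun i _ => sum_congr rfl fun j _ => ?_
  rw [hM]
  ring

theorem finsum_mul_deriv_eq_of_isWebEigen {C A1 : Type*} {L : WebPoint C A1 → WebPoint C A1 → ℝ}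
    {α : WebPoint C A1} (hα : (support (L α)).Finite) {U : Set ℂ} {ω₀ : ℂ} (hU : U ∈ 𝓝 ω₀)
    {lam : ℂ → ℂ} {lam' : ℂ} (hlam' : HasDerivAt lam lam' ω₀) {ξ : WebPoint C A1 → ℂ → ℂ}
    (hξ : ∀ ω ∈ U, IsWebEigen L (lam ω) fun β => ξ β ω) {ξ' : WebPoint C A1 → ℂ}
    (hξ' : ∀ β, HasDerivAt (ξ β) (ξ' β) ω₀) :
    ∑ᶠ β, (L α β : ℂ) * ξ' β = lam' * ξ α ω₀ + lam ω₀ * ξ' α := by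
  have hsupp (f : WebPoint C A1 → ℂ) : support (fun β => (L α β : ℂ) * f β) ⊆ hα.toFinset :=
    fun β hβ => hα.mem_toFinset.2 fun h => hβ (by simp [h])
  have hrow : HasDerivAt (fun ω => ∑ᶠ β, (L α β : ℂ) * ξ β ω) (∑ᶠ β, (L α β : ℂ) * ξ' β) ω₀ := by
    simp only [finsum_eq_sum_of_support_subset _ (hsupp _)]
    exact HasDerivAt.fun_sum fun β _ => (hξ' β).const_mul _
  have heigen : (fun ω => ∑ᶠ β, (L α β : ℂ) * ξ β ω) =ᶠ[𝓝 ω₀] fun ω => lam ω * ξ α ω :=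
    eventually_of_mem hU fun ω hω => hξ ω hω α
  exact hrow.unique ((hlam'.mul (hξ' α)).congr_of_eventuallyEq heigen)

section

variable {C A1 : Type*}

structure IsWebOperator (γ : C → A1) (𝔟 : C → ℕ → ℝ) (L : WebPoint C A1 → WebPoint C A1 → ℝ) :
    Prop where
  symm : ∀ α β, L α β = L β α
  chain_offDiag : ∀ σ k, L (webPt γ σ k) (webPt γ σ (k + 1)) = -(𝔟 σ k)
  chain_row_eq_zero : ∀ σ (k : ℕ) (β : WebPoint C A1), β ≠ webPt γ σ k → β ≠ webPt γ σ (k + 1) →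
      β ≠ webPt γ σ (k + 2) → L (webPt γ σ (k + 1)) β = 0

namespace IsWebOperator

variable {γ : C → A1} {𝔟 : C → ℕ → ℝ} {L : WebPoint C A1 → WebPoint C A1 → ℝ}

theorem inl_inr_succ (hL : IsWebOperator γ 𝔟 L) (a : A1) (σ : C) (k : ℕ) :
    L (.inl a) (.inr (σ, k + 1)) = 0 := by
  rw [hL.symm]
  exact hL.chain_row_eq_zero σ (k + 1) (.inl a) (by simp [webPt]) (by simp [webPt])
    (by simp [webPt])

theorem inl_inr_zero [DecidableEq A1] (hL : IsWebOperator γ 𝔟 L) (a : A1) (σ : C) :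
    L (.inl a) (.inr (σ, 0)) = if γ σ = a then -𝔟 σ 0 else 0 := by
  split_ifs with h
  · subst h
    exact hL.chain_offDiag σ 0
  · rw [hL.symm]
    exact hL.chain_row_eq_zero σ 0 (.inl a) (by simp [webPt, Ne.symm h]) (by simp [webPt])
      (by simp [webPt])

theorem finite_support_inl (hL : IsWebOperator γ 𝔟 L) [Finite C] [Finite A1] (a : A1) :
    (support (L (.inl a))).Finite := by
  refine (Set.finite_range (Sum.map id (·, 0) : A1 ⊕ C → WebPoint C A1)).subset ?_
  rintro (a' | ⟨σ, _ | k⟩) h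
  · exact ⟨.inl a', rfl⟩
  · exact ⟨.inr σ, rfl⟩
  · exact absurd (hL.inl_inr_succ a σ k) h

variable [Fintype C] [Fintype A1] [DecidableEq A1]

theorem finsum_inl_mul (hL : IsWebOperator γ 𝔟 L) (a : A1) (f : WebPoint C A1 → ℂ) :
    ∑ᶠ β, (L (.inl a) β : ℂ) * f β = ∑ a', (L (.inl a) (.inl a') : ℂ) * f (.inl a')
      - ∑ σ, if γ σ = a then (𝔟 σ 0 : ℂ) * f (webPt γ σ 1) else 0 := by
  rw [finsum_eq_sum_inl_add_sum_inr_zero _ fun σ k => by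
    rw [hL.inl_inr_succ, ofReal_zero, zero_mul], sub_eq_add_neg, ← sum_neg_distrib]
  congr 1
  refine sum_congr rfl fun σ _ => ?_
  rw [hL.inl_inr_zero]
  split_ifs <;> simp [webPt]

theorem green (hL : IsWebOperator γ 𝔟 L) (u v : WebPoint C A1 → ℂ) :
    ∑ a, (∑ᶠ β, (L (.inl a) β : ℂ) * u β) * conj (v (.inl a))
      - ∑ a, u (.inl a) * conj (∑ᶠ β, (L (.inl a) β : ℂ) * v β)
      = ∑ σ, (𝔟 σ 0 : ℂ) * (u (webPt γ σ 0) * conj (v (webPt γ σ 1))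
          - u (webPt γ σ 1) * conj (v (webPt γ σ 0))) := by
  have hcentral := sum_mul_conj_eq_sum_mul_conj_of_symm (fun a a' => hL.symm (.inl a) (.inl a'))
    (u ∘ .inl) (v ∘ .inl)
  have hchannels :
      ∑ a, u (.inl a) * conj (∑ σ, if γ σ = a then (𝔟 σ 0 : ℂ) * v (webPt γ σ 1) else 0)
      - ∑ a, (∑ σ, if γ σ = a then (𝔟 σ 0 : ℂ) * u (webPt γ σ 1) else 0) * conj (v (.inl a))
      = ∑ σ, (𝔟 σ 0 : ℂ) * (u (webPt γ σ 0) * conj (v (webPt γ σ 1))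
          - u (webPt γ σ 1) * conj (v (webPt γ σ 0))) := by
    simp only [map_sum, mul_sum, sum_mul, ← sum_sub_distrib]
    rw [sum_comm]
    refine sum_congr rfl fun σ _ => ?_
    simp only [webPt, apply_ite conj, map_mul, conj_ofReal, map_zero, mul_ite, mul_zero, ite_mul,
      zero_mul, sum_sub_distrib, sum_ite_eq, mem_univ, ↓reduceIte]
    ring
  simp only [comp_apply] at hcentral
  rw [← hchannels]
  simp only [hL.finsum_inl_mul, sub_mul, mul_sub, map_sub, sum_sub_distrib]
  linear_combination hcentral

end IsWebOperator

end

theorem web_energy_identity_general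
    {C A1 : Type*} [Fintype C] [Fintype A1]
    (γ : C → A1)
    (𝔟 : C → ℕ → ℝ)
    (L : WebPoint C A1 → WebPoint C A1 → ℝ)
    (hsym : ∀ α β, L α β = L β α)
    (hoff : ∀ σ k, L (webPt γ σ k) (webPt γ σ (k + 1)) = -(𝔟 σ k))
    (hzero : ∀ σ (k : ℕ) (β : WebPoint C A1), β ≠ webPt γ σ k → β ≠ webPt γ σ (k + 1) →
      β ≠ webPt γ σ (k + 2) → L (webPt γ σ (k + 1)) β = 0)
    (U : Set ℂ) (hU : IsOpen U) (ω₀ : ℂ) (hω₀ : ω₀ ∈ U)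
    (lam : ℂ → ℂ) (lam' : ℂ) (hlam' : HasDerivAt lam lam' ω₀)
    (hlamreal : (lam ω₀).im = 0)
    (ξ : WebPoint C A1 → ℂ → ℂ)
    (hξ : ∀ ω ∈ U, IsWebEigen L (lam ω) (fun α => ξ α ω))
    (ξ' : WebPoint C A1 → ℂ) (hξ' : ∀ α, HasDerivAt (ξ α) (ξ' α) ω₀)
    (η : WebPoint C A1 → ℂ) (hη : IsWebEigen L (lam ω₀) η) :
    lam' * ∑ α : A1, ξ (Sum.inl α) ω₀ * (starRingEnd ℂ) (η (Sum.inl α))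
      = ∑ σ : C, (𝔟 σ 0 : ℂ) *
          (ξ' (webPt γ σ 0) * (starRingEnd ℂ) (η (webPt γ σ 1))
            - ξ' (webPt γ σ 1) * (starRingEnd ℂ) (η (webPt γ σ 0)))
    ∧
    lam' * ∑ α : A1, ((‖ξ (Sum.inl α) ω₀‖ : ℝ) : ℂ) ^ 2
      = ∑ σ : C, (𝔟 σ 0 : ℂ) *
          (ξ' (webPt γ σ 0) * (starRingEnd ℂ) (ξ (webPt γ σ 1) ω₀)
            - ξ' (webPt γ σ 1) * (starRingEnd ℂ) (ξ (webPt γ σ 0) ω₀)) := by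
  classical
  have hL : IsWebOperator γ 𝔟 L := ⟨hsym, hoff, hzero⟩
  have hlam_conj : conj (lam ω₀) = lam ω₀ := conj_eq_iff_im.2 hlamreal
  have energy (η : WebPoint C A1 → ℂ) (hη : IsWebEigen L (lam ω₀) η) :
      lam' * ∑ a : A1, ξ (.inl a) ω₀ * conj (η (.inl a))
        = ∑ σ : C, (𝔟 σ 0 : ℂ) * (ξ' (webPt γ σ 0) * conj (η (webPt γ σ 1))
            - ξ' (webPt γ σ 1) * conj (η (webPt γ σ 0))) := by
    rw [← hL.green ξ' η, mul_sum, ← sum_sub_distrib]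
    refine sum_congr rfl fun a _ => ?_
    rw [finsum_mul_deriv_eq_of_isWebEigen (hL.finite_support_inl a) (hU.mem_nhds hω₀) hlam' hξ hξ',
      hη, map_mul, hlam_conj]
    ring
  refine ⟨energy η hη, ?_⟩
  simp only [← mul_conj']
  exact energy _ (hξ ω₀ hω₀)

theorem web_energy_identity
    {C A1 : Type*} [Fintype C] [Nonempty C] [Fintype A1]
    (γ : C → A1) (hγ : Function.Injective γ)
    (𝔞 𝔟 : C → ℕ → ℝ) (h𝔟 : ∀ σ k, 0 < 𝔟 σ k)
    (L : WebPoint C A1 → WebPoint C A1 → ℝ)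
    (hsym : ∀ α β, L α β = L β α)
    (hdiag : ∀ σ k, L (webPt γ σ (k + 1)) (webPt γ σ (k + 1)) = 𝔞 σ (k + 1))
    (hoff : ∀ σ k, L (webPt γ σ k) (webPt γ σ (k + 1)) = -(𝔟 σ k))
    (hzero : ∀ σ (k : ℕ) (β : WebPoint C A1), β ≠ webPt γ σ k → β ≠ webPt γ σ (k + 1) →
      β ≠ webPt γ σ (k + 2) → L (webPt γ σ (k + 1)) β = 0)
    (U : Set ℂ) (hU : IsOpen U) (ω₀ : ℂ) (hω₀ : ω₀ ∈ U)
    (lam : ℂ → ℂ) (lam' : ℂ) (hlam' : HasDerivAt lam lam' ω₀)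
    (hlamreal : (lam ω₀).im = 0)
    (ξ : WebPoint C A1 → ℂ → ℂ)
    (hξ : ∀ ω ∈ U, IsWebEigen L (lam ω) (fun α => ξ α ω))
    (ξ' : WebPoint C A1 → ℂ) (hξ' : ∀ α, HasDerivAt (ξ α) (ξ' α) ω₀)
    (η : WebPoint C A1 → ℂ) (hη : IsWebEigen L (lam ω₀) η) :
    lam' * ∑ α : A1, ξ (Sum.inl α) ω₀ * (starRingEnd ℂ) (η (Sum.inl α))
      = ∑ σ : C, (𝔟 σ 0 : ℂ) *
          (ξ' (webPt γ σ 0) * (starRingEnd ℂ) (η (webPt γ σ 1))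
            - ξ' (webPt γ σ 1) * (starRingEnd ℂ) (η (webPt γ σ 0)))
    ∧
    lam' * ∑ α : A1, ((‖ξ (Sum.inl α) ω₀‖ : ℝ) : ℂ) ^ 2
      = ∑ σ : C, (𝔟 σ 0 : ℂ) *
          (ξ' (webPt γ σ 0) * (starRingEnd ℂ) (ξ (webPt γ σ 1) ω₀)
            - ξ' (webPt γ σ 1) * (starRingEnd ℂ) (ξ (webPt γ σ 0) ω₀)) :=
  web_energy_identity_general γ 𝔟 L hsym hoff hzero U hU ω₀ hω₀ lam lam' hlam' hlamreal ξ hξ ξ' hξ'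
    η hη
end

section
/- In the web model, let L₁ = (L(α,β))_{α,β ∈ 𝒜₁} be the central submatrix and let λ ∈ ℂ not be an eigenvalue of L₁; denote by r(α,β;λ) the entries of (L₁ − λI)⁻¹. Let ξ : 𝒜 → ℂ satisfy the channel equations: for every σ ∈ 𝒞 and k ≥ 1, −𝔟_σ(k−1)ξ(σ(k−1)) + 𝔞_σ(k)ξ(σ(k)) − 𝔟_σ(k)ξ(σ(k+1)) = λ·ξ(σ(k)). Then ξ satisfies Lξ = λξ at every point of 𝒜 if and only if ξ(α) = ∑_{ν ∈ 𝒞} r(α, ν(0); λ)·𝔟_ν(0)·ξ(ν(1)) for every α ∈ 𝒜₁. Consequently, a function defined on the channels and attachment points and satisfying the channel equations together with the boundary condition ξ(σ(0)) = ∑_{ν ∈ 𝒞} r(σ(0), ν(0); λ)·𝔟_ν(0)·ξ(ν(1)) for all σ ∈ 𝒞 admits a unique extension to 𝒜 satisfying Lξ = λξ. -/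
open Complex

/-- `ξ` satisfies the channel equations (`k ≥ 1` written as `k + 1`). -/
def SatisfiesChannelEqs {C A1 : Type*} (γ : C → A1) (𝔞 𝔟 : C → ℕ → ℝ) (lam : ℂ)
    (ξ : WebPoint C A1 → ℂ) : Prop :=
  ∀ σ (k : ℕ), -(𝔟 σ k : ℂ) * ξ (webPt γ σ k) + (𝔞 σ (k + 1) : ℂ) * ξ (webPt γ σ (k + 1))
      - (𝔟 σ (k + 1) : ℂ) * ξ (webPt γ σ (k + 2)) = lam * ξ (webPt γ σ (k + 1))

lemma webPt_injective {C A1 : Type*} (γ : C → A1) (σ : C) :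
    Function.Injective (webPt γ σ) := by
  intro a b h
  match a, b with
  | 0, 0 => rfl
  | 0, b + 1 => simp [webPt] at h
  | a + 1, 0 => simp [webPt] at h
  | a + 1, b + 1 => simp only [webPt, Sum.inr.injEq, Prod.mk.injEq] at h; omega

theorem web_boundary_condition
    {C A1 : Type*} [Fintype C] [Nonempty C] [Fintype A1] [DecidableEq A1]
    (γ : C → A1) (hγ : Function.Injective γ)
    (𝔞 𝔟 : C → ℕ → ℝ) (h𝔟 : ∀ σ k, 0 < 𝔟 σ k)
    (L : WebPoint C A1 → WebPoint C A1 → ℝ)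
    (hsym : ∀ α β, L α β = L β α)
    (hdiag : ∀ σ k, L (webPt γ σ (k + 1)) (webPt γ σ (k + 1)) = 𝔞 σ (k + 1))
    (hoff : ∀ σ k, L (webPt γ σ k) (webPt γ σ (k + 1)) = -(𝔟 σ k))
    (hzero : ∀ σ (k : ℕ) (β : WebPoint C A1), β ≠ webPt γ σ k → β ≠ webPt γ σ (k + 1) →
      β ≠ webPt γ σ (k + 2) → L (webPt γ σ (k + 1)) β = 0)
    (lam : ℂ)
    -- `λ` is not an eigenvalue of the central submatrix `L₁`:
    (hreg : IsUnit (((Matrix.of fun v w : A1 => (L (Sum.inl v) (Sum.inl w) : ℂ)) -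
      lam • (1 : Matrix A1 A1 ℂ)).det))
    -- `R` is the resolvent `(L₁ − λI)⁻¹`:
    (R : Matrix A1 A1 ℂ)
    (hR : R = ((Matrix.of fun v w : A1 => (L (Sum.inl v) (Sum.inl w) : ℂ)) -
      lam • (1 : Matrix A1 A1 ℂ))⁻¹)
    (ξ : WebPoint C A1 → ℂ) (hchan : SatisfiesChannelEqs γ 𝔞 𝔟 lam ξ) :
    (IsWebEigen L lam ξ ↔
      ∀ v : A1, ξ (Sum.inl v) = ∑ ν : C, R v (γ ν) * (𝔟 ν 0 : ℂ) * ξ (webPt γ ν 1))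
    ∧
    (∀ η : C → ℕ → ℂ,
      (∀ σ (k : ℕ), -(𝔟 σ k : ℂ) * η σ k + (𝔞 σ (k + 1) : ℂ) * η σ (k + 1)
          - (𝔟 σ (k + 1) : ℂ) * η σ (k + 2) = lam * η σ (k + 1)) →
      (∀ σ : C, η σ 0 = ∑ ν : C, R (γ σ) (γ ν) * (𝔟 ν 0 : ℂ) * η ν 1) →
      ∃! ζ : WebPoint C A1 → ℂ, IsWebEigen L lam ζ ∧ ∀ σ (k : ℕ), ζ (webPt γ σ k) = η σ k) := by
  classical
  set M : Matrix A1 A1 ℂ :=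
    (Matrix.of fun v w : A1 => (L (Sum.inl v) (Sum.inl w) : ℂ)) - lam • 1 with hM
  -- row computation at channel points
  have hA : ∀ (ξ' : WebPoint C A1 → ℂ) (σ : C) (k : ℕ),
      ∑ᶠ β, (L (webPt γ σ (k + 1)) β : ℂ) * ξ' β
        = -(𝔟 σ k : ℂ) * ξ' (webPt γ σ k) + (𝔞 σ (k + 1) : ℂ) * ξ' (webPt γ σ (k + 1))
          - (𝔟 σ (k + 1) : ℂ) * ξ' (webPt γ σ (k + 2)) := by
    intro ξ' σ k
    have h01 : webPt γ σ k ≠ webPt γ σ (k + 1) := by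
      intro h; have := webPt_injective γ σ h; omega
    have h02 : webPt γ σ k ≠ webPt γ σ (k + 2) := by
      intro h; have := webPt_injective γ σ h; omega
    have h12 : webPt γ σ (k + 1) ≠ webPt γ σ (k + 2) := by
      intro h; have := webPt_injective γ σ h; omega
    have hsub : (Function.support fun β => (L (webPt γ σ (k + 1)) β : ℂ) * ξ' β)
        ⊆ ({webPt γ σ k, webPt γ σ (k + 1), webPt γ σ (k + 2)} : Finset (WebPoint C A1)) := by
      intro β hβ
      simp only [Function.mem_support, ne_eq] at hβ
      by_contra hβs
      simp only [Finset.coe_insert, Set.mem_insert_iff, Finset.coe_singleton,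
        Set.mem_singleton_iff, not_or] at hβs
      exact hβ (by rw [hzero σ k β hβs.1 hβs.2.1 hβs.2.2]; simp)
    rw [finsum_eq_sum_of_support_subset _ hsub]
    rw [Finset.sum_insert (by simp [h01, h02]),
      Finset.sum_insert (by simp [h12]), Finset.sum_singleton]
    rw [hsym (webPt γ σ (k + 1)) (webPt γ σ k), hoff σ k, hdiag σ k, hoff σ (k + 1)]
    push_cast
    ring
  -- row computation at central points
  have hB : ∀ (ξ' : WebPoint C A1 → ℂ) (v : A1),
      ∑ᶠ β, (L (Sum.inl v) β : ℂ) * ξ' β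
        = (∑ w : A1, (L (Sum.inl v) (Sum.inl w) : ℂ) * ξ' (Sum.inl w))
          + ∑ σ : C, (if v = γ σ then -(𝔟 σ 0 : ℂ) else 0) * ξ' (Sum.inr (σ, 0)) := by
    intro ξ' v
    have hLz : ∀ (σ : C) (j : ℕ), L (Sum.inl v) (Sum.inr (σ, j + 1)) = 0 := by
      intro σ j
      rw [hsym]
      have h : (Sum.inr (σ, j + 1) : WebPoint C A1) = webPt γ σ (j + 1 + 1) := rfl
      rw [h]
      exact hzero σ (j + 1) _ (by simp [webPt]) (by simp [webPt]) (by simp [webPt])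
    have hLit : ∀ σ : C, L (Sum.inl v) (Sum.inr (σ, 0)) = if v = γ σ then -(𝔟 σ 0) else 0 := by
      intro σ
      split_ifs with h
      · subst h
        have h0 : (Sum.inl (γ σ) : WebPoint C A1) = webPt γ σ 0 := rfl
        have h1 : (Sum.inr (σ, 0) : WebPoint C A1) = webPt γ σ 1 := rfl
        rw [h0, h1]; exact hoff σ 0
      · rw [hsym]
        have h1 : (Sum.inr (σ, 0) : WebPoint C A1) = webPt γ σ (0 + 1) := rfl
        rw [h1]
        refine hzero σ 0 _ (by simp [webPt, Ne, Sum.inl.injEq]; exact h) ?_ ?_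
        · simp [webPt]
        · simp [webPt]
    set S : Finset (WebPoint C A1) :=
      Finset.univ.image Sum.inl ∪ Finset.univ.image (fun σ : C => (Sum.inr (σ, 0) : WebPoint C A1))
      with hS
    have hsub : (Function.support fun β => (L (Sum.inl v) β : ℂ) * ξ' β) ⊆ (S : Set _) := by
      intro β hβ
      simp only [Function.mem_support, ne_eq] at hβ
      rcases β with w | ⟨σ, j⟩
      · simp [hS]
      · rcases j with _ | j
        · simp [hS]
        · exact absurd (by rw [hLz σ j]; simp) hβ
    rw [finsum_eq_sum_of_support_subset _ hsub]
    have hdisj : Disjoint (Finset.univ.image (Sum.inl : A1 → WebPoint C A1))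
        (Finset.univ.image (fun σ : C => (Sum.inr (σ, 0) : WebPoint C A1))) := by
      simp only [Finset.disjoint_left, Finset.mem_image]
      rintro x ⟨w, -, rfl⟩ ⟨σ, -, h⟩
      exact absurd h (by simp)
    rw [hS, Finset.sum_union hdisj,
      Finset.sum_image (fun a _ b _ h => Sum.inl_injective h),
      Finset.sum_image (fun a _ b _ h => by
        simpa using (Sum.inr_injective h : (a, 0) = (b, 0)))]
    congr 1
    refine Finset.sum_congr rfl fun σ _ => ?_
    rw [hLit σ]
    split_ifs with h <;> simp
  -- the key equivalence, for any function satisfying the channel equations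
  have key : ∀ ξ' : WebPoint C A1 → ℂ, SatisfiesChannelEqs γ 𝔞 𝔟 lam ξ' →
      (IsWebEigen L lam ξ' ↔
        ∀ v : A1, ξ' (Sum.inl v) = ∑ ν : C, R v (γ ν) * (𝔟 ν 0 : ℂ) * ξ' (webPt γ ν 1)) := by
    intro ξ' hch
    set x : A1 → ℂ := fun v => ξ' (Sum.inl v) with hx
    set b : A1 → ℂ := fun v => ∑ σ : C, (if v = γ σ then (𝔟 σ 0 : ℂ) * ξ' (Sum.inr (σ, 0)) else 0)
      with hb
    have step1 : IsWebEigen L lam ξ' ↔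
        ∀ v, ∑ᶠ β, (L (Sum.inl v) β : ℂ) * ξ' β = lam * ξ' (Sum.inl v) := by
      constructor
      · exact fun h v => h (Sum.inl v)
      · intro h α
        rcases α with v | ⟨σ, k⟩
        · exact h v
        · have hα : (Sum.inr (σ, k) : WebPoint C A1) = webPt γ σ (k + 1) := rfl
          rw [hα, hA ξ' σ k]
          exact hch σ k
    have hMv : ∀ v, M.mulVec x v
        = (∑ w : A1, (L (Sum.inl v) (Sum.inl w) : ℂ) * x w) - lam * x v := by
      intro v
      rw [hM, Matrix.sub_mulVec, Matrix.smul_mulVec, Matrix.one_mulVec]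
      simp [Matrix.mulVec, dotProduct]
    have step2 : (∀ v, ∑ᶠ β, (L (Sum.inl v) β : ℂ) * ξ' β = lam * ξ' (Sum.inl v)) ↔
        M.mulVec x = b := by
      rw [funext_iff]
      refine forall_congr' fun v => ?_
      rw [hB ξ' v, hMv v]
      have hbv : b v = -∑ σ : C, (if v = γ σ then -(𝔟 σ 0 : ℂ) else 0) * ξ' (Sum.inr (σ, 0)) := by
        rw [hb, ← Finset.sum_neg_distrib]
        refine Finset.sum_congr rfl fun σ _ => ?_
        split_ifs with h <;> ring
      rw [hbv]
      constructor
      · intro h; linear_combination h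
      · intro h; linear_combination h
    have step3 : M.mulVec x = b ↔ x = R.mulVec b := by
      constructor
      · intro h
        rw [← h, hR, Matrix.mulVec_mulVec, Matrix.nonsing_inv_mul M hreg,
          Matrix.one_mulVec]
      · intro h
        rw [h, hR, Matrix.mulVec_mulVec, Matrix.mul_nonsing_inv M hreg,
          Matrix.one_mulVec]
    have step4 : x = R.mulVec b ↔
        ∀ v : A1, ξ' (Sum.inl v) = ∑ ν : C, R v (γ ν) * (𝔟 ν 0 : ℂ) * ξ' (webPt γ ν 1) := by
      rw [funext_iff]
      refine forall_congr' fun v => ?_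
      have hRb : R.mulVec b v = ∑ ν : C, R v (γ ν) * (𝔟 ν 0 : ℂ) * ξ' (webPt γ ν 1) := by
        simp only [Matrix.mulVec, dotProduct, hb, Finset.mul_sum]
        rw [Finset.sum_comm]
        refine Finset.sum_congr rfl fun σ _ => ?_
        have : ∀ w : A1, R v w * (if w = γ σ then (𝔟 σ 0 : ℂ) * ξ' (Sum.inr (σ, 0)) else 0)
            = if w = γ σ then R v w * ((𝔟 σ 0 : ℂ) * ξ' (Sum.inr (σ, 0))) else 0 := by
          intro w; split_ifs <;> simp
        simp only [this]
        rw [Finset.sum_ite_eq' Finset.univ (γ σ)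
          (fun w => R v w * ((𝔟 σ 0 : ℂ) * ξ' (Sum.inr (σ, 0))))]
        simp [webPt, mul_assoc]
      rw [hRb]
    exact step1.trans (step2.trans (step3.trans step4))
  refine ⟨key ξ hchan, ?_⟩
  intro η hη hbc
  set ζ : WebPoint C A1 → ℂ := fun β => match β with
    | Sum.inl v => ∑ ν : C, R v (γ ν) * (𝔟 ν 0 : ℂ) * η ν 1
    | Sum.inr (σ, k) => η σ (k + 1)
    with hζ
  have hζw : ∀ σ k, ζ (webPt γ σ k) = η σ k := by
    intro σ k
    cases k with
    | zero => exact (hbc σ).symm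
    | succ k => rfl
  have hζch : SatisfiesChannelEqs γ 𝔞 𝔟 lam ζ := by
    intro σ k
    simp only [hζw]
    exact hη σ k
  have hζe : IsWebEigen L lam ζ := by
    refine (key ζ hζch).2 fun v => ?_
    simp only [hζ]
    refine Finset.sum_congr rfl fun ν _ => ?_
    rfl
  refine ⟨ζ, ⟨hζe, hζw⟩, ?_⟩
  rintro ζ' ⟨hζ'e, hζ'w⟩
  have hζ'ch : SatisfiesChannelEqs γ 𝔞 𝔟 lam ζ' := by
    intro σ k
    simp only [hζ'w]
    exact hη σ k
  funext β
  rcases β with v | ⟨σ, k⟩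
  · rw [(key ζ' hζ'ch).1 hζ'e v]
    simp only [hζ]
    refine Finset.sum_congr rfl fun ν _ => ?_
    rw [show webPt γ ν 1 = Sum.inr (ν, 0) from rfl, show (Sum.inr (ν,0) : WebPoint C A1) = webPt γ ν 1 from rfl, hζ'w ν 1]
  · have h := hζ'w σ (k + 1)
    simpa [webPt] using h
end

section
/- Let L₁ be a real symmetric M×M matrix with eigenvalues λ₁, …, λ_M and a corresponding orthonormal family of real eigenvectors p₁, …, p_M. Let a, b ∈ ℝ, ω ∈ ℂ \ {0}, and set λ(ω) = a − b(ω + ω⁻¹); assume λ(ω) is not an eigenvalue of L₁ and write R(λ(ω)) = (L₁ − λ(ω)I)⁻¹. Then R(λ(ω))* − R(λ(ω)) = b·(ω̄ − ω)·(|ω|^{−2} − 1)·Δ₁(ω), where Δ₁(ω) = ∑_{l=1}^{M} p_l p_lᵀ / |λ_l − λ(ω)|², and moreover Δ₁(ω) is a positive semidefinite Hermitian matrix. -/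
/-!
Orthonormality of the `M` vectors `p_l` in `ℝ^M` forces completeness, `∑ p_l p_lᵀ = 1`, so
`L₁ - λ` has the inverse `∑ (λ_l - λ)⁻¹ p_l p_lᵀ`. Since the `p_l` are real, `R* - R` is the same
sum with coefficients `conj (λ_l - λ)⁻¹ - (λ_l - λ)⁻¹ = (conj λ - λ) / |λ_l - λ|²`, and
`conj λ - λ = b (ω̄ - ω) (|ω|⁻² - 1)` because `ω⁻¹ = ω̄ / |ω|²`. Each `p_l p_lᵀ` is positive
semidefinite, hence so is `Δ₁`.
-/

open Complex Matrix
open scoped ComplexOrder ComplexConjugate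

namespace Matrix

variable {n K : Type*} [Fintype n] [DecidableEq n]

theorem sum_vecMulVec_self_eq_one_of_orthonormal [CommRing K] {v : n → n → K}
    (hv : ∀ l l', v l ⬝ᵥ v l' = if l = l' then 1 else 0) :
    ∑ l, vecMulVec (v l) (v l) = 1 := by
  have hrows : of v * (of v)ᵀ = 1 := by
    ext l l'
    simpa [mul_apply, dotProduct, one_apply] using hv l l'
  have hcols : (of v)ᵀ * of v = 1 := mul_eq_one_comm.mp hrows
  ext i j
  simpa [sum_apply, mul_apply, vecMulVec_apply] using congrFun (congrFun hcols i) j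

theorem inv_eq_sum_of_eigenbasis [Field K] {A : Matrix n n K} {v w : n → n → K} {μ : n → K}
    (hcomplete : ∑ l, vecMulVec (v l) (w l) = 1) (heig : ∀ l, A *ᵥ v l = μ l • v l)
    (hμ : ∀ l, μ l ≠ 0) :
    A⁻¹ = ∑ l, (μ l)⁻¹ • vecMulVec (v l) (w l) := by
  refine inv_eq_right_inv ?_
  simp_rw [Finset.mul_sum, mul_smul_comm, mul_vecMulVec, heig, smul_vecMulVec, smul_smul,
    inv_mul_cancel₀ (hμ _), one_smul, hcomplete]

theorem inv_sub_smul_one_eq_sum_of_eigenbasis [Field K] {A : Matrix n n K} {v w : n → n → K}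
    {μ : n → K} (hcomplete : ∑ l, vecMulVec (v l) (w l) = 1)
    (heig : ∀ l, A *ᵥ v l = μ l • v l) {z : K} (hz : ∀ l, μ l ≠ z) :
    (A - z • 1)⁻¹ = ∑ l, (μ l - z)⁻¹ • vecMulVec (v l) (w l) := by
  refine inv_eq_sum_of_eigenbasis hcomplete (fun l => ?_) (fun l => sub_ne_zero.mpr (hz l))
  rw [sub_mulVec, smul_mulVec, one_mulVec, heig, sub_smul]

omit [DecidableEq n] in
theorem map_mulVec_eq_smul_of_mulVec_eq_smul {R S : Type*} [CommSemiring R] [CommSemiring S]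
    (f : R →+* S) {A : Matrix n n R} {v : n → R} {μ : R} (h : A *ᵥ v = μ • v) :
    A.map f *ᵥ (f ∘ v) = f μ • (f ∘ v) := by
  ext i
  rw [← RingHom.map_mulVec, h]
  simp

omit [DecidableEq n] in
theorem conjTranspose_sum_smul_vecMulVec_self [CommRing K] [StarRing K] {v : n → n → K}
    (hv : ∀ l, star (v l) = v l) (c : n → K) :
    (∑ l, c l • vecMulVec (v l) (v l))ᴴ = ∑ l, star (c l) • vecMulVec (v l) (v l) := by
  simp_rw [conjTranspose_sum, conjTranspose_smul, conjTranspose_vecMulVec, hv]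

end Matrix

namespace Complex

theorem conj_inv_sub_inv (z : ℂ) :
    conj z⁻¹ - z⁻¹ = (z - conj z) * ((‖z‖ ^ 2 : ℝ) : ℂ)⁻¹ := by
  rw [inv_def z, map_mul, conj_conj, conj_ofReal, ← normSq_eq_norm_sq]
  push_cast
  ring

theorem conj_sub_self_of_joukowski (a b : ℝ) (ω : ℂ) :
    conj (a - b * (ω + ω⁻¹)) - (a - b * (ω + ω⁻¹))
      = b * (conj ω - ω) * ((((‖ω‖ : ℝ) : ℂ) ^ 2)⁻¹ - 1) := by
  have h := conj_inv_sub_inv ω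
  simp only [map_sub, map_mul, map_add, conj_ofReal] at h ⊢
  push_cast at h
  linear_combination (-(b : ℂ)) * h

theorem conj_inv_ofReal_sub_sub_inv (t : ℝ) (z : ℂ) :
    conj ((t : ℂ) - z)⁻¹ - ((t : ℂ) - z)⁻¹ = (conj z - z) * ((‖(t : ℂ) - z‖ ^ 2 : ℝ) : ℂ)⁻¹ := by
  rw [conj_inv_sub_inv, map_sub, conj_ofReal, sub_sub_sub_cancel_left]

end Complex

theorem resolvent_antisymmetric_part_general
    (M : ℕ) (L₁ : Matrix (Fin M) (Fin M) ℝ)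
    (lamv : Fin M → ℝ) (p : Fin M → Fin M → ℝ)
    (heig : ∀ l, L₁.mulVec (p l) = lamv l • p l)
    (hortho : ∀ l l', p l ⬝ᵥ p l' = if l = l' then 1 else 0)
    (a b : ℝ) (ω : ℂ)
    (hreg : ∀ l, (lamv l : ℂ) ≠ a - b * (ω + ω⁻¹))
    (R : Matrix (Fin M) (Fin M) ℂ)
    (hR : R = ((L₁.map fun t => (t : ℂ)) - (a - b * (ω + ω⁻¹)) • (1 : Matrix (Fin M) (Fin M) ℂ))⁻¹)
    (Δ₁ : Matrix (Fin M) (Fin M) ℂ)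
    (hΔ₁ : Δ₁ = ∑ l : Fin M, Matrix.of fun i j =>
      ((p l i * p l j : ℝ) : ℂ) / (((‖(lamv l : ℂ) - (a - b * (ω + ω⁻¹))‖ : ℝ) : ℂ) ^ 2)) :
    Rᴴ - R = ((b : ℂ) * ((starRingEnd ℂ) ω - ω) * ((((‖ω‖ : ℝ) : ℂ) ^ 2)⁻¹ - 1)) • Δ₁
    ∧ Δ₁.PosSemidef := by
  set z : ℂ := a - b * (ω + ω⁻¹)
  set q : Fin M → Fin M → ℂ := fun l => ofRealHom ∘ p l
  have hq_real : ∀ l, star (q l) = q l := fun l => by ext i; simp [q]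
  have hq_ortho : ∀ l l', q l ⬝ᵥ q l' = if l = l' then 1 else 0 := fun l l' => by
    rw [← RingHom.map_dotProduct, hortho]
    split_ifs <;> simp
  have hq_eig : ∀ l, (L₁.map fun t => (t : ℂ)) *ᵥ q l = (lamv l : ℂ) • q l := fun l =>
    map_mulVec_eq_smul_of_mulVec_eq_smul ofRealHom (heig l)
  have hR_eq : R = ∑ l, ((lamv l : ℂ) - z)⁻¹ • vecMulVec (q l) (q l) := by
    rw [hR]
    exact inv_sub_smul_one_eq_sum_of_eigenbasis
      (sum_vecMulVec_self_eq_one_of_orthonormal hq_ortho) hq_eig hreg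
  have hΔ_eq : Δ₁ = ∑ l, ((‖(lamv l : ℂ) - z‖ ^ 2)⁻¹ : ℝ) • vecMulVec (q l) (q l) := by
    rw [hΔ₁]
    refine Finset.sum_congr rfl fun l _ => ?_
    ext i j
    simp [q, vecMulVec_apply, div_eq_inv_mul]
  refine ⟨?_, ?_⟩
  · rw [hR_eq, conjTranspose_sum_smul_vecMulVec_self hq_real, ← Finset.sum_sub_distrib, hΔ_eq,
      Finset.smul_sum]
    refine Finset.sum_congr rfl fun l _ => ?_
    rw [← sub_smul, star_def, conj_inv_ofReal_sub_sub_inv, conj_sub_self_of_joukowski,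
      ← ofReal_inv, mul_smul, ← algebraMap_smul ℂ]
    rfl
  · rw [hΔ_eq]
    refine posSemidef_sum _ fun l _ => ?_
    have h := (posSemidef_vecMulVec_self_star (q l)).smul
      (a := ((‖(lamv l : ℂ) - z‖ ^ 2)⁻¹ : ℝ)) (by positivity)
    rwa [hq_real] at h

theorem resolvent_antisymmetric_part
    (M : ℕ) (L₁ : Matrix (Fin M) (Fin M) ℝ) (hsym : L₁.IsSymm)
    (lamv : Fin M → ℝ) (p : Fin M → Fin M → ℝ)
    (heig : ∀ l, L₁.mulVec (p l) = lamv l • p l)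
    (hortho : ∀ l l', p l ⬝ᵥ p l' = if l = l' then 1 else 0)
    (a b : ℝ) (ω : ℂ) (hω : ω ≠ 0)
    (hreg : ∀ l, (lamv l : ℂ) ≠ a - b * (ω + ω⁻¹))
    (R : Matrix (Fin M) (Fin M) ℂ)
    (hR : R = ((L₁.map fun t => (t : ℂ)) - (a - b * (ω + ω⁻¹)) • (1 : Matrix (Fin M) (Fin M) ℂ))⁻¹)
    (Δ₁ : Matrix (Fin M) (Fin M) ℂ)
    (hΔ₁ : Δ₁ = ∑ l : Fin M, Matrix.of fun i j =>
      ((p l i * p l j : ℝ) : ℂ) / (((‖(lamv l : ℂ) - (a - b * (ω + ω⁻¹))‖ : ℝ) : ℂ) ^ 2)) :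
    Rᴴ - R = ((b : ℂ) * ((starRingEnd ℂ) ω - ω) * ((((‖ω‖ : ℝ) : ℂ) ^ 2)⁻¹ - 1)) • Δ₁
    ∧ Δ₁.PosSemidef :=
  resolvent_antisymmetric_part_general M L₁ lamv p heig hortho a b ω hreg R hR Δ₁ hΔ₁
end

section
/- Let M be an n×n complex matrix such that M − M* = Φ·Δ + i·N, where Φ = diag(i·t₁, …, i·t_n) with real t_j ≥ 0, Δ = diag(δ₁, …, δ_n) with real δ_j ≥ C for some constant C > 0, and N is a positive semidefinite Hermitian matrix. Then for every x ∈ ℂⁿ, |⟨M x, x⟩| ≥ |Im ⟨M x, x⟩| ≥ (C/2)·∑_{j=1}^{n} t_j·|x_j|². -/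
/-!
Taking imaginary parts, `2 Im ⟨Mx, x⟩ = Im ⟨(M - M*)x, x⟩ = ∑ⱼ tⱼ δⱼ |xⱼ|² + ⟨Nx, x⟩`,
where `⟨Nx, x⟩ ≥ 0` because `N` is positive semidefinite, and `tⱼ δⱼ ≥ C tⱼ` because `tⱼ ≥ 0`.
-/

open Matrix Complex
open scoped ComplexOrder

namespace Matrix

variable {n : Type*} [Fintype n]

theorem im_dotProduct_sub_conjTranspose_mulVec (M : Matrix n n ℂ) (x : n → ℂ) :
    (star x ⬝ᵥ (M - Mᴴ) *ᵥ x).im = 2 * (star x ⬝ᵥ M *ᵥ x).im := by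
  have hadjoint : star x ⬝ᵥ Mᴴ *ᵥ x = star (star x ⬝ᵥ M *ᵥ x) := by
    rw [star_dotProduct, star_mulVec, conjTranspose_conjTranspose, ← dotProduct_mulVec]
  rw [sub_mulVec, dotProduct_sub, hadjoint, sub_im, star_def, conj_im]
  ring

theorem dotProduct_diagonal_ofReal_mulVec [DecidableEq n] (r : n → ℝ) (x : n → ℂ) :
    star x ⬝ᵥ diagonal (fun j => (r j : ℂ)) *ᵥ x = ((∑ j, r j * ‖x j‖ ^ 2 : ℝ) : ℂ) := by
  simp only [dotProduct, mulVec_diagonal, Pi.star_apply, ofReal_sum, ofReal_mul, ofReal_pow,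
    ← mul_conj', star_def]
  exact Finset.sum_congr rfl fun j _ => by ring

end Matrix

theorem imaginary_part_lower_bound_general {n : ℕ}
    (M N : Matrix (Fin n) (Fin n) ℂ)
    (t δ : Fin n → ℝ) (ht : ∀ j, 0 ≤ t j)
    (C : ℝ) (hδ : ∀ j, C ≤ δ j)
    (hN : N.PosSemidef)
    (hM : M - Mᴴ = Matrix.diagonal (fun j => Complex.I * (t j : ℂ)) *
        Matrix.diagonal (fun j => (δ j : ℂ)) + Complex.I • N) :
    ∀ x : Fin n → ℂ,
      ‖star x ⬝ᵥ M.mulVec x‖ ≥ |(star x ⬝ᵥ M.mulVec x).im| ∧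
      |(star x ⬝ᵥ M.mulVec x).im| ≥ (C / 2) * ∑ j, t j * ‖x j‖ ^ 2 := by
  intro x
  refine ⟨abs_im_le_norm _, ?_⟩
  have hdiag : diagonal (fun j => I * (t j : ℂ)) * diagonal (fun j => (δ j : ℂ)) =
      I • diagonal (fun j => ((t j * δ j : ℝ) : ℂ)) := by
    rw [diagonal_mul_diagonal, ← diagonal_smul]
    congr 1
    ext j
    simp only [Pi.smul_apply, smul_eq_mul, ofReal_mul]
    ring
  have him : 2 * (star x ⬝ᵥ M *ᵥ x).im =
      ∑ j, t j * δ j * ‖x j‖ ^ 2 + (star x ⬝ᵥ N *ᵥ x).re := by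
    rw [← im_dotProduct_sub_conjTranspose_mulVec, hM, hdiag, ← smul_add, smul_mulVec,
      dotProduct_smul, smul_eq_mul, I_mul_im, add_mulVec, dotProduct_add, add_re,
      dotProduct_diagonal_ofReal_mulVec, ofReal_re]
  have hweights : C * ∑ j, t j * ‖x j‖ ^ 2 ≤ ∑ j, t j * δ j * ‖x j‖ ^ 2 := by
    rw [Finset.mul_sum]
    refine Finset.sum_le_sum fun j _ => ?_
    linarith [mul_le_mul_of_nonneg_left (hδ j) (mul_nonneg (ht j) (sq_nonneg ‖x j‖))]
  have hN_nonneg : 0 ≤ (star x ⬝ᵥ N *ᵥ x).re := hN.re_dotProduct_nonneg x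
  linarith [le_abs_self (star x ⬝ᵥ M *ᵥ x).im]

theorem imaginary_part_lower_bound {n : ℕ}
    (M N : Matrix (Fin n) (Fin n) ℂ)
    (t δ : Fin n → ℝ) (ht : ∀ j, 0 ≤ t j)
    (C : ℝ) (hC : 0 < C) (hδ : ∀ j, C ≤ δ j)
    (hN : N.PosSemidef)
    (hM : M - Mᴴ = Matrix.diagonal (fun j => Complex.I * (t j : ℂ)) *
        Matrix.diagonal (fun j => (δ j : ℂ)) + Complex.I • N) :
    ∀ x : Fin n → ℂ,
      ‖star x ⬝ᵥ M.mulVec x‖ ≥ |(star x ⬝ᵥ M.mulVec x).im| ∧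
      |(star x ⬝ᵥ M.mulVec x).im| ≥ (C / 2) * ∑ j, t j * ‖x j‖ ^ 2 :=
  imaginary_part_lower_bound_general M N t δ ht C hδ hN hM
end

section
/- Let a, b ∈ ℝ with b > 0, let 𝔞(k) (k ≥ 1) and 𝔟(k) > 0 (k ≥ 0) be real, let c : ℕ → ℂ with c(k) ≠ 0 and 𝔟(k−1)·c(k−1) = b·c(k) for all k ≥ 1, and let complex coefficients a(k,m) (m ≥ k ≥ 0) satisfy a(k,k) = 1 and, for some ρ > 1, ∑_{m ≥ k} |a(k,m)|·ρ^m < ∞ for every k. Define e(k,θ) = c(k)·∑_{m ≥ k} a(k,m)·θ^m, and assume that for every θ with 0 < |θ| < ρ and every k ≥ 1, −𝔟(k−1)e(k−1,θ) + 𝔞(k)e(k,θ) − 𝔟(k)e(k+1,θ) = (a − b(θ + θ⁻¹))·e(k,θ). Then for every k ≥ 1: (𝔞(k) − a)/b = a(k−1,k) − a(k,k+1), and 𝔟(k)²/b² = ((𝔞(k) − a)/b)·a(k,k+1) + a(k,k+2) − a(k−1,k+1) + 1. -/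
/-!
Since `a(j, m) = 0` for `m < j`, the Jost solutions factor as `e(j, θ) = c(j) θ^j S_j(θ)` with
`S_j(θ) = ∑ₙ a(j, j + n) θⁿ` and `S_j(0) = 1`. Eliminating `c` through `𝔟(k-1) c(k-1) = b c(k)` and
dividing by `b c(k) θ^(k-1)` turns the difference equation into
`S_k - S_{k-1} + θ (𝔞(k) - a)/b S_k + θ² (S_k - 𝔟(k)²/b² S_{k+1}) = 0`
on the punctured unit disc. The coefficients of `θ` and `θ²` of this power series vanish, and these
are the two identities; they are read off by letting `θ → 0` in `c + θ g(θ) = 0`, `g` continuous.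
-/

open Complex Filter Topology

section PowerSeries

variable {𝕜 : Type*} [NontriviallyNormedField 𝕜]

theorem summable_mul_pow_of_norm_le_one [CompleteSpace 𝕜] {d : ℕ → 𝕜}
    (hd : Summable fun n => ‖d n‖) {θ : 𝕜} (hθ : ‖θ‖ ≤ 1) : Summable fun n => d n * θ ^ n :=
  hd.of_norm_bounded fun n => by
    rw [norm_mul, norm_pow]
    exact mul_le_of_le_one_right (norm_nonneg _) (pow_le_one₀ (norm_nonneg _) hθ)

theorem continuousOn_tsum_mul_pow [CompleteSpace 𝕜] {d : ℕ → 𝕜} (hd : Summable fun n => ‖d n‖) :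
    ContinuousOn (fun θ : 𝕜 => ∑' n, d n * θ ^ n) (Metric.closedBall 0 1) := by
  refine continuousOn_tsum (fun n => (continuous_const.mul (continuous_pow n)).continuousOn) hd ?_
  intro n θ hθ
  rw [norm_mul, norm_pow]
  exact mul_le_of_le_one_right (norm_nonneg _)
    (pow_le_one₀ (norm_nonneg _) (mem_closedBall_zero_iff.1 hθ))

theorem tsum_mul_pow_eq_add_mul_tsum {d : ℕ → 𝕜} {θ : 𝕜} (hs : Summable fun n => d n * θ ^ n) :
    ∑' n, d n * θ ^ n = d 0 + θ * ∑' n, d (n + 1) * θ ^ n := by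
  rw [hs.tsum_eq_zero_add, ← tsum_mul_left]
  simp only [pow_zero, mul_one, pow_succ]
  congr 1
  exact tsum_congr fun n => by ring

theorem tsum_mul_pow_eq_pow_mul_tsum_of_eq_zero {d : ℕ → 𝕜} {θ : 𝕜}
    (hs : Summable fun n => d n * θ ^ n) {j : ℕ} (hd : ∀ m < j, d m = 0) :
    ∑' m, d m * θ ^ m = θ ^ j * ∑' n, d (j + n) * θ ^ n := by
  rw [← hs.sum_add_tsum_nat_add j, Finset.sum_eq_zero fun m hm => by
    rw [hd m (Finset.mem_range.1 hm), zero_mul], zero_add, ← tsum_mul_left]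
  exact tsum_congr fun n => by rw [add_comm, pow_add]; ring

theorem eq_zero_and_eventually_eq_zero_of_add_smul {E : Type*} [NormedAddCommGroup E]
    [NormedSpace 𝕜 E] {c : E} {g : 𝕜 → E} (hg : ContinuousAt g 0)
    (h : ∀ᶠ θ in 𝓝[≠] 0, c + θ • g θ = 0) : c = 0 ∧ ∀ᶠ θ in 𝓝[≠] 0, g θ = 0 := by
  have hcont : ContinuousAt (fun θ : 𝕜 => c + θ • g θ) 0 := by fun_prop
  have hc : c = 0 := by
    simpa using
      ((hcont.eventuallyEq_nhds_iff_eventuallyEq_nhdsNE continuousAt_const).1 h).eq_of_nhds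
  refine ⟨hc, ?_⟩
  filter_upwards [h, self_mem_nhdsWithin] with θ hθ (hθ0 : θ ≠ 0)
  rw [hc, zero_add, smul_eq_zero] at hθ
  exact hθ.resolve_left hθ0

theorem coeff_eq_zero_of_tsum_add_mul_tsum_add_sq_mul_tsum [CompleteSpace 𝕜] {p q r : ℕ → 𝕜}
    (hp : Summable fun n => ‖p n‖) (hq : Summable fun n => ‖q n‖) (hr : Summable fun n => ‖r n‖)
    (h : ∀ᶠ θ in 𝓝[≠] 0,
      ∑' n, p n * θ ^ n + θ * ∑' n, q n * θ ^ n + θ ^ 2 * ∑' n, r n * θ ^ n = 0) :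
    p 0 = 0 ∧ p 1 + q 0 = 0 ∧ p 2 + q 1 + r 0 = 0 := by
  have hcont {d : ℕ → 𝕜} (hd : Summable fun n => ‖d n‖) :
      ContinuousAt (fun θ : 𝕜 => ∑' n, d n * θ ^ n) 0 :=
    (continuousOn_tsum_mul_pow hd).continuousAt (Metric.closedBall_mem_nhds 0 one_pos)
  have hpeel {d : ℕ → 𝕜} (hd : Summable fun n => ‖d n‖) : ∀ᶠ θ in 𝓝[≠] 0,
      ∑' n, d n * θ ^ n = d 0 + θ * ∑' n, d (n + 1) * θ ^ n := by
    filter_upwards [nhdsWithin_le_nhds (Metric.closedBall_mem_nhds (0 : 𝕜) one_pos)] with θ hθ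
    exact tsum_mul_pow_eq_add_mul_tsum
      (summable_mul_pow_of_norm_le_one hd (mem_closedBall_zero_iff.1 hθ))
  have htail {d : ℕ → 𝕜} (hd : Summable fun n => ‖d n‖) : Summable fun n => ‖d (n + 1)‖ :=
    (summable_nat_add_iff 1).2 hd
  obtain ⟨h0, h1⟩ := eq_zero_and_eventually_eq_zero_of_add_smul (c := p 0)
    (g := fun θ => ∑' n, p (n + 1) * θ ^ n + ∑' n, q n * θ ^ n + θ * ∑' n, r n * θ ^ n)
    (by have := hcont (htail hp); have := hcont hq; have := hcont hr; fun_prop)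
    (by filter_upwards [h, hpeel hp] with θ hθ hθp
        rw [smul_eq_mul]; linear_combination hθ - hθp)
  obtain ⟨h1, h2⟩ := eq_zero_and_eventually_eq_zero_of_add_smul (c := p 1 + q 0)
    (g := fun θ => ∑' n, p (n + 2) * θ ^ n + ∑' n, q (n + 1) * θ ^ n + ∑' n, r n * θ ^ n)
    (by have := hcont (htail (htail hp)); have := hcont (htail hq); have := hcont hr; fun_prop)
    (by filter_upwards [h1, hpeel (htail hp), hpeel hq] with θ hθ hθp hθq
        rw [smul_eq_mul]; linear_combination hθ - hθp - hθq)
  obtain ⟨h2, -⟩ := eq_zero_and_eventually_eq_zero_of_add_smul (c := p 2 + q 1 + r 0)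
    (g := fun θ => ∑' n, p (n + 3) * θ ^ n + ∑' n, q (n + 2) * θ ^ n + ∑' n, r (n + 1) * θ ^ n)
    (by have := hcont (htail (htail (htail hp))); have := hcont (htail (htail hq))
        have := hcont (htail hr); fun_prop)
    (by filter_upwards [h2, hpeel (htail (htail hp)), hpeel (htail hq), hpeel hr]
          with θ hθ hθp hθq hθr
        rw [smul_eq_mul]; linear_combination hθ - hθp - hθq - hθr)
  exact ⟨h0, h1, h2⟩

end PowerSeries

theorem normalized_eq_zero_of_three_term_eq {K : Type*} [Field K]
    {a b α β₀ β₁ c₀ c₁ c₂ θ X Y Z : K} (j : ℕ) (hb : b ≠ 0) (hθ : θ ≠ 0) (hc₁ : c₁ ≠ 0)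
    (h₀ : β₀ * c₀ = b * c₁) (h₁ : β₁ * c₁ = b * c₂)
    (H : -β₀ * (c₀ * (θ ^ j * X)) + α * (c₁ * (θ ^ (j + 1) * Y))
        - β₁ * (c₂ * (θ ^ (j + 2) * Z)) = (a - b * (θ + θ⁻¹)) * (c₁ * (θ ^ (j + 1) * Y))) :
    Y - X + θ * ((α - a) / b * Y) + θ ^ 2 * (Y - β₁ ^ 2 / b ^ 2 * Z) = 0 := by
  refine (mul_eq_zero.1 ?_).resolve_left (mul_ne_zero hc₁ (pow_ne_zero (j + 1) hθ))
  field_simp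
  linear_combination (b * θ) * H + (b * θ ^ (j + 1) * X) * h₀
    - (β₁ * θ ^ (j + 3) * Z) * h₁ - (b ^ 2 * c₁ * θ ^ (j + 1) * Y) * mul_inv_cancel₀ hθ

theorem coefficients_from_jost_series_general
    (a b : ℝ) (hb : 0 < b)
    (𝔞 𝔟 : ℕ → ℝ)
    (c : ℕ → ℂ) (hc0 : ∀ k, c k ≠ 0) (hc : ∀ k : ℕ, (𝔟 k : ℂ) * c k = (b : ℂ) * c (k + 1))
    (A : ℕ → ℕ → ℂ) (hAdiag : ∀ k, A k k = 1) (hAzero : ∀ k m, m < k → A k m = 0)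
    (ρ : ℝ) (hρ : 1 < ρ)
    (hAsum : ∀ k, Summable fun m : ℕ => ‖A k m‖ * ρ ^ m)
    (e : ℕ → ℂ → ℂ) (he : ∀ k θ, e k θ = c k * ∑' m : ℕ, A k m * θ ^ m)
    (heq : ∀ θ : ℂ, 0 < ‖θ‖ → ‖θ‖ < ρ → ∀ k : ℕ,
      -(𝔟 k : ℂ) * e k θ + (𝔞 (k + 1) : ℂ) * e (k + 1) θ - (𝔟 (k + 1) : ℂ) * e (k + 2) θ
        = ((a : ℂ) - (b : ℂ) * (θ + θ⁻¹)) * e (k + 1) θ) :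
    ∀ k : ℕ,
      (((𝔞 (k + 1) - a) / b : ℝ) : ℂ) = A k (k + 1) - A (k + 1) (k + 2) ∧
      (((𝔟 (k + 1)) ^ 2 / b ^ 2 : ℝ) : ℂ)
        = (((𝔞 (k + 1) - a) / b : ℝ) : ℂ) * A (k + 1) (k + 2)
          + A (k + 1) (k + 3) - A k (k + 2) + 1 := by
  intro k
  have hA j : Summable fun m => ‖A j m‖ := (hAsum j).of_nonneg_of_le (fun _ => norm_nonneg _)
    fun m => le_mul_of_one_le_right (norm_nonneg _) (one_le_pow₀ hρ.le)
  set α : ℕ → ℕ → ℂ := fun j n => A j (j + n)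
  have hα j : Summable fun n => ‖α j n‖ := by
    simpa only [α, add_comm] using (summable_nat_add_iff j).2 (hA j)
  have hb' : (b : ℂ) ≠ 0 := by exact_mod_cast hb.ne'
  have key : ∀ᶠ θ in 𝓝[≠] (0 : ℂ),
      ∑' n, (α (k + 1) n - α k n) * θ ^ n
        + θ * ∑' n, (((𝔞 (k + 1) - a) / b : ℝ) : ℂ) * α (k + 1) n * θ ^ n
        + θ ^ 2 * ∑' n, (α (k + 1) n - (((𝔟 (k + 1)) ^ 2 / b ^ 2 : ℝ) : ℂ) * α (k + 2) n) * θ ^ n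
        = 0 := by
    filter_upwards [self_mem_nhdsWithin, nhdsWithin_le_nhds (Metric.ball_mem_nhds (0 : ℂ) one_pos)]
      with θ (hθ0 : θ ≠ 0) hθ1
    have hθ1 : ‖θ‖ < 1 := mem_ball_zero_iff.1 hθ1
    have hs j : Summable fun n => α j n * θ ^ n :=
      summable_mul_pow_of_norm_le_one (hα j) hθ1.le
    have he' j : e j θ = c j * (θ ^ j * ∑' n, α j n * θ ^ n) := by
      rw [he, tsum_mul_pow_eq_pow_mul_tsum_of_eq_zero
        (summable_mul_pow_of_norm_le_one (hA j) hθ1.le) (hAzero j)]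
    have H := heq θ (norm_pos_iff.2 hθ0) (hθ1.trans hρ) k
    rw [he', he', he'] at H
    simp_rw [sub_mul, mul_assoc]
    rw [(hs _).tsum_sub (hs _), tsum_mul_left, (hs _).tsum_sub ((hs _).mul_left _), tsum_mul_left]
    push_cast
    exact normalized_eq_zero_of_three_term_eq k hb' hθ0 (hc0 (k + 1)) (hc k) (hc (k + 1)) H
  obtain ⟨-, h1, h2⟩ := coeff_eq_zero_of_tsum_add_mul_tsum_add_sq_mul_tsum
    (summable_norm_iff (E := ℂ) |>.2 ((hα _).of_norm.sub (hα _).of_norm))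
    (summable_norm_iff (E := ℂ) |>.2 ((hα _).of_norm.mul_left _))
    (summable_norm_iff (E := ℂ) |>.2 ((hα _).of_norm.sub ((hα _).of_norm.mul_left _))) key
  simp only [α, hAdiag, add_assoc, Nat.reduceAdd] at h1 h2
  exact ⟨by linear_combination h1, by linear_combination -h2⟩

theorem coefficients_from_jost_series
    (a b : ℝ) (hb : 0 < b)
    (𝔞 𝔟 : ℕ → ℝ) (h𝔟 : ∀ k, 0 < 𝔟 k)
    (c : ℕ → ℂ) (hc0 : ∀ k, c k ≠ 0) (hc : ∀ k : ℕ, (𝔟 k : ℂ) * c k = (b : ℂ) * c (k + 1))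
    (A : ℕ → ℕ → ℂ) (hAdiag : ∀ k, A k k = 1) (hAzero : ∀ k m, m < k → A k m = 0)
    (ρ : ℝ) (hρ : 1 < ρ)
    (hAsum : ∀ k, Summable fun m : ℕ => ‖A k m‖ * ρ ^ m)
    (e : ℕ → ℂ → ℂ) (he : ∀ k θ, e k θ = c k * ∑' m : ℕ, A k m * θ ^ m)
    (heq : ∀ θ : ℂ, 0 < ‖θ‖ → ‖θ‖ < ρ → ∀ k : ℕ,
      -(𝔟 k : ℂ) * e k θ + (𝔞 (k + 1) : ℂ) * e (k + 1) θ - (𝔟 (k + 1) : ℂ) * e (k + 2) θ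
        = ((a : ℂ) - (b : ℂ) * (θ + θ⁻¹)) * e (k + 1) θ) :
    ∀ k : ℕ,
      (((𝔞 (k + 1) - a) / b : ℝ) : ℂ) = A k (k + 1) - A (k + 1) (k + 2) ∧
      (((𝔟 (k + 1)) ^ 2 / b ^ 2 : ℝ) : ℂ)
        = (((𝔞 (k + 1) - a) / b : ℝ) : ℂ) * A (k + 1) (k + 2)
          + A (k + 1) (k + 3) - A k (k + 2) + 1 :=
  coefficients_from_jost_series_general a b hb 𝔞 𝔟 c hc0 hc A hAdiag hAzero ρ hρ hAsum e he heq
end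

section
/- In the web model, let λ ∈ ℝ and let ξ : 𝒜 → ℂ satisfy Lξ = λξ. Suppose that for each σ ∈ 𝒞 there are a complex number x_σ, a sequence e_σ : ℕ → ℂ, and a real number c_σ ≥ 0 such that ξ(σ(k)) = x_σ·e_σ(k) for all k ≥ 0 and 𝔟_σ(0)·(e_σ(0)·ē_σ(1) − e_σ(1)·ē_σ(0)) = i·c_σ. Then c_σ·|x_σ|² = 0 for every σ ∈ 𝒞; in particular x_σ = 0 for every σ with c_σ > 0. -/
/-!
Multiply the eigenvalue equation on the central part `A1` by `ξ̄` and sum. The terms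
`λ |ξ a|²` and the quadratic form of the real symmetric block `L|A1` are real, so the boundary
term `∑ σ, 𝔟 σ 0 * ξ̄ (σ(0)) * ξ (σ(1))` is real as well. By the Wronskian hypothesis its
imaginary part is `-½ ∑ σ, c σ * |x σ|²`, a sum of nonnegative terms, which therefore all vanish.
-/

open Complex

open Finset ComplexConjugate

theorem im_sum_conj_mul_sum_eq_zero_of_symm {ι : Type*} [Fintype ι] (M : ι → ι → ℝ)
    (hM : ∀ i j, M i j = M j i) (v : ι → ℂ) :
    (∑ i, conj (v i) * ∑ j, (M i j : ℂ) * v j).im = 0 := by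
  have hH : ((Matrix.of M).map ((↑) : ℝ → ℂ)).IsHermitian :=
    (Matrix.isHermitian_iff_isSymm.mpr (Matrix.IsSymm.ext fun i j => hM j i)).map _
      fun r => (Complex.conj_ofReal r).symm
  simpa [dotProduct, Matrix.mulVec] using hH.im_star_dotProduct_mulVec_self v

theorem two_mul_im_conj_mul_of_wronskian {b c : ℝ} {x e₀ e₁ : ℂ}
    (h : (b : ℂ) * (e₀ * conj e₁ - e₁ * conj e₀) = Complex.I * c) :
    2 * (b * (conj (x * e₀) * (x * e₁)).im) = -(c * ‖x‖ ^ 2) := by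
  have him := congrArg Complex.im h
  simp [Complex.sq_norm, Complex.normSq_apply] at him ⊢
  linear_combination (-(x.re * x.re + x.im * x.im)) * him

section Web

variable {C A1 : Type*} {γ : C → A1} {L : WebPoint C A1 → WebPoint C A1 → ℝ}

theorem L_inl_webPt_succ_eq_zero (hsym : ∀ α β, L α β = L β α)
    (hzero : ∀ σ (k : ℕ) (β : WebPoint C A1), β ≠ webPt γ σ k → β ≠ webPt γ σ (k + 1) →
      β ≠ webPt γ σ (k + 2) → L (webPt γ σ (k + 1)) β = 0)
    (a : A1) (σ : C) (k : ℕ) (ha : Sum.inl a ≠ webPt γ σ k) :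
    L (Sum.inl a) (webPt γ σ (k + 1)) = 0 := by
  rw [hsym]
  exact hzero σ k _ ha (by simp [webPt]) (by simp [webPt])

theorem IsWebEigen.central_row [Fintype C] [Fintype A1] {lam : ℂ} {ξ : WebPoint C A1 → ℂ}
    (hξ : IsWebEigen L lam ξ)
    (hL : ∀ a σ k, Sum.inl a ≠ webPt γ σ k → L (Sum.inl a) (webPt γ σ (k + 1)) = 0) (a : A1) :
    lam * ξ (Sum.inl a) = ∑ b, (L (Sum.inl a) (Sum.inl b) : ℂ) * ξ (Sum.inl b) +
      ∑ σ, (L (Sum.inl a) (webPt γ σ 1) : ℂ) * ξ (webPt γ σ 1) := by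
  classical
  have hsupp : (Function.support fun β => (L (Sum.inl a) β : ℂ) * ξ β) ⊆
      (univ.disjSum (univ.image fun σ => (σ, 0)) : Finset (WebPoint C A1)) := by
    rintro (b | ⟨σ, _ | k⟩) hβ
    · simp
    · simp
    · refine absurd ?_ hβ
      simp [show L (Sum.inl a) (Sum.inr (σ, k + 1)) = 0 from
        hL a σ (k + 1) (by simp [webPt])]
  rw [← hξ, finsum_eq_finsetSum_of_support_subset _ hsupp, sum_disjSum,
    sum_image fun _ _ _ _ h => by simpa using h]
  rfl

theorem sum_conj_mul_sum_L_inl_webPt_one [Fintype C] [Fintype A1]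
    (hL : ∀ a σ k, Sum.inl a ≠ webPt γ σ k → L (Sum.inl a) (webPt γ σ (k + 1)) = 0)
    {𝔟 : C → ℕ → ℝ} (hoff : ∀ σ k, L (webPt γ σ k) (webPt γ σ (k + 1)) = -(𝔟 σ k))
    (ξ : WebPoint C A1 → ℂ) :
    ∑ a, conj (ξ (Sum.inl a)) * ∑ σ, (L (Sum.inl a) (webPt γ σ 1) : ℂ) * ξ (webPt γ σ 1) =
      -∑ σ, (𝔟 σ 0 : ℂ) * (conj (ξ (webPt γ σ 0)) * ξ (webPt γ σ 1)) := by
  simp_rw [mul_sum]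
  rw [sum_comm, ← sum_neg_distrib]
  refine sum_congr rfl fun σ _ => ?_
  rw [sum_eq_single (γ σ) (fun a _ ha => ?_) (by simp)]
  · rw [show Sum.inl (γ σ) = webPt γ σ 0 from rfl, hoff]
    push_cast
    ring
  · rw [hL a σ 0 (by simpa [webPt] using ha)]
    simp

theorem IsWebEigen.sum_im_flux_eq_zero [Fintype C] [Fintype A1] {lam : ℝ}
    {ξ : WebPoint C A1 → ℂ} (hξ : IsWebEigen L lam ξ) (hsym : ∀ α β, L α β = L β α)
    (hL : ∀ a σ k, Sum.inl a ≠ webPt γ σ k → L (Sum.inl a) (webPt γ σ (k + 1)) = 0)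
    {𝔟 : C → ℕ → ℝ} (hoff : ∀ σ k, L (webPt γ σ k) (webPt γ σ (k + 1)) = -(𝔟 σ k)) :
    ∑ σ, 𝔟 σ 0 * (conj (ξ (webPt γ σ 0)) * ξ (webPt γ σ 1)).im = 0 := by
  have hrows := congrArg Complex.im <|
    congrArg (fun f => ∑ a, conj (ξ (Sum.inl a)) * f a) (funext (hξ.central_row hL))
  simp only [mul_add, sum_add_distrib, Complex.add_im] at hrows
  rw [sum_conj_mul_sum_L_inl_webPt_one hL hoff,
    im_sum_conj_mul_sum_eq_zero_of_symm _ (fun a b => hsym _ _)] at hrows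
  have hself (z : ℂ) : (conj z * ((lam : ℂ) * z)).im = 0 := by simp; ring
  simpa only [Complex.im_sum, hself, sum_const_zero, Complex.neg_im, Complex.im_ofReal_mul,
    zero_add, zero_eq_neg] using hrows

end Web

theorem web_eigenfunction_vanishing_general
    {C A1 : Type*} [Fintype C] [Fintype A1]
    (γ : C → A1)
    (𝔟 : C → ℕ → ℝ)
    (L : WebPoint C A1 → WebPoint C A1 → ℝ)
    (hsym : ∀ α β, L α β = L β α)
    (hoff : ∀ σ k, L (webPt γ σ k) (webPt γ σ (k + 1)) = -(𝔟 σ k))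
    (hzero : ∀ σ (k : ℕ) (β : WebPoint C A1), β ≠ webPt γ σ k → β ≠ webPt γ σ (k + 1) →
      β ≠ webPt γ σ (k + 2) → L (webPt γ σ (k + 1)) β = 0)
    (lam : ℝ) (ξ : WebPoint C A1 → ℂ) (hξ : IsWebEigen L (lam : ℂ) ξ)
    (x : C → ℂ) (e : C → ℕ → ℂ) (c : C → ℝ) (hc : ∀ σ, 0 ≤ c σ)
    (hfact : ∀ σ (k : ℕ), ξ (webPt γ σ k) = x σ * e σ k)
    (hWr : ∀ σ : C, (𝔟 σ 0 : ℂ) *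
      (e σ 0 * (starRingEnd ℂ) (e σ 1) - e σ 1 * (starRingEnd ℂ) (e σ 0))
        = Complex.I * (c σ : ℂ)) :
    (∀ σ : C, c σ * ‖x σ‖ ^ 2 = 0) ∧
    (∀ σ : C, 0 < c σ → x σ = 0) := by
  have hsum : ∑ σ, c σ * ‖x σ‖ ^ 2 = 0 := by
    have hflux := congrArg (2 * ·) (hξ.sum_im_flux_eq_zero hsym
      (L_inl_webPt_succ_eq_zero hsym hzero) hoff)
    simpa only [mul_sum, hfact, two_mul_im_conj_mul_of_wronskian (hWr _), sum_neg_distrib,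
      mul_zero, neg_eq_zero] using hflux
  have hterm σ : c σ * ‖x σ‖ ^ 2 = 0 :=
    (sum_eq_zero_iff_of_nonneg fun σ _ => mul_nonneg (hc σ) (sq_nonneg _)).mp hsum σ (mem_univ σ)
  exact ⟨hterm, fun σ hσ => by simpa [hσ.ne'] using hterm σ⟩

theorem web_eigenfunction_vanishing
    {C A1 : Type*} [Fintype C] [Nonempty C] [Fintype A1]
    (γ : C → A1) (hγ : Function.Injective γ)
    (𝔞 𝔟 : C → ℕ → ℝ) (h𝔟 : ∀ σ k, 0 < 𝔟 σ k)
    (L : WebPoint C A1 → WebPoint C A1 → ℝ)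
    (hsym : ∀ α β, L α β = L β α)
    (hdiag : ∀ σ k, L (webPt γ σ (k + 1)) (webPt γ σ (k + 1)) = 𝔞 σ (k + 1))
    (hoff : ∀ σ k, L (webPt γ σ k) (webPt γ σ (k + 1)) = -(𝔟 σ k))
    (hzero : ∀ σ (k : ℕ) (β : WebPoint C A1), β ≠ webPt γ σ k → β ≠ webPt γ σ (k + 1) →
      β ≠ webPt γ σ (k + 2) → L (webPt γ σ (k + 1)) β = 0)
    (lam : ℝ) (ξ : WebPoint C A1 → ℂ) (hξ : IsWebEigen L (lam : ℂ) ξ)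
    (x : C → ℂ) (e : C → ℕ → ℂ) (c : C → ℝ) (hc : ∀ σ, 0 ≤ c σ)
    (hfact : ∀ σ (k : ℕ), ξ (webPt γ σ k) = x σ * e σ k)
    (hWr : ∀ σ : C, (𝔟 σ 0 : ℂ) *
      (e σ 0 * (starRingEnd ℂ) (e σ 1) - e σ 1 * (starRingEnd ℂ) (e σ 0))
        = Complex.I * (c σ : ℂ)) :
    (∀ σ : C, c σ * ‖x σ‖ ^ 2 = 0) ∧
    (∀ σ : C, 0 < c σ → x σ = 0) :=
  web_eigenfunction_vanishing_general γ 𝔟 L hsym hoff hzero lam ξ hξ x e c hc hfact hWr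
end
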